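/- arXiv:1601.03003 — 9 statements merged into one kernel-verified Lean document; each statement's English description precedes it below -/
import Mathlib

section
/- For a simple graph G with an edge ab where neither a nor b is looped, the pivot G^{ab} with labels of a and b swapped equals the triple local complement G*a*b*a. -/
/-- The local complement `G * v`: interchange edges and non-edges within the
open neighborhood `N(v)` of `v`. -/
def localComplement {V : Type*} (G : SimpleGraph V) (v : V) : SimpleGraph V where
  Adj x y := x ≠ y ∧ Xor' (G.Adj x y) (G.Adj v x ∧ G.Adj v y)
  symm := by
    constructor
    intro x y h
    obtain ⟨hxy, hx⟩ := h
    refine ⟨hxy.symm, ?_⟩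
    unfold Xor' at *
    simp only [xor_def] at *
    have h1 := G.adj_comm x y
    tauto
  loopless := by constructor; intro x h; exact h.1 rfl

/-- Vertices `x` and `y` form a toggled pair for the pivot `G^{ab}`. -/
def pivotToggle {V : Type*} (G : SimpleGraph V) (a b x y : V) : Prop :=
  x ≠ a ∧ x ≠ b ∧ y ≠ a ∧ y ≠ b ∧
  (G.Adj a x ∨ G.Adj b x) ∧ (G.Adj a y ∨ G.Adj b y) ∧
  ¬((G.Adj a x ↔ G.Adj a y) ∧ (G.Adj b x ↔ G.Adj b y))

theorem pivotToggle_symm {V : Type*} (G : SimpleGraph V) (a b x y : V) :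
    pivotToggle G a b x y ↔ pivotToggle G a b y x := by
  unfold pivotToggle
  constructor <;>
    · rintro ⟨h1, h2, h3, h4, h5, h6, h7⟩
      exact ⟨h3, h4, h1, h2, h6, h5, fun ⟨p, q⟩ => h7 ⟨p.symm, q.symm⟩⟩

/-- The pivot `G^{ab}`: toggle all edges/non-edges between the three classes of
vertices adjacent to `a` only, to `b` only, and to both. -/
def pivot {V : Type*} (G : SimpleGraph V) (a b : V) : SimpleGraph V where
  Adj x y := x ≠ y ∧ Xor' (G.Adj x y) (pivotToggle G a b x y)
  symm := by
    constructor
    intro x y h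
    obtain ⟨hxy, hx⟩ := h
    refine ⟨hxy.symm, ?_⟩
    have ht := pivotToggle_symm G a b x y
    have ha := G.adj_comm x y
    unfold Xor' at *
    simp only [xor_def] at *
    tauto
  loopless := by constructor; intro x h; exact h.1 rfl

/-- `G_{ab}`: the graph `G` with the labels of the vertices `a` and `b` swapped. -/
def swapLabels {V : Type*} [DecidableEq V] (G : SimpleGraph V) (a b : V) : SimpleGraph V where
  Adj x y := G.Adj (Equiv.swap a b x) (Equiv.swap a b y)
  symm := ⟨fun _ _ h => G.symm.symm _ _ h⟩
  loopless := ⟨fun _ h => G.loopless.irrefl _ h⟩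

/-!
Write `α w` and `β w` for adjacency of `w` to `a` and to `b`, and compute modulo 2. Since `ab`
is an edge, `G * a` replaces `β` by `α + β` off `{a, b}`, and in `G * a * b` the vertex `a`
has neighbourhood `β` off `{a, b}`. So the three complements toggle a pair `x y` off `{a, b}`
`α x α y + (α x + β x)(α y + β y) + β x β y = α x β y + β x α y` times, which is odd exactly
when `x` and `y` lie in two different classes among `(1,0)`, `(0,1)`, `(1,1)`: the pivot rule.
At `a` and `b` the pivot changes nothing, while `G * a * b * a` has the edges of `G` with `a`
and `b` exchanged.
-/

theorem SimpleGraph.ext_of_adj_pair {V : Type*} {G H : SimpleGraph V} (a b : V)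
    (ha : ∀ y, G.Adj a y ↔ H.Adj a y) (hb : ∀ y, G.Adj b y ↔ H.Adj b y)
    (hrest : ∀ x y, x ≠ a → x ≠ b → y ≠ a → y ≠ b → (G.Adj x y ↔ H.Adj x y)) :
    G = H := by
  have hpair : ∀ x y, x = a ∨ x = b → (G.Adj x y ↔ H.Adj x y) := by
    rintro x y (rfl | rfl)
    exacts [ha y, hb y]
  ext x y
  by_cases hx : x = a ∨ x = b
  · exact hpair x y hx
  by_cases hy : y = a ∨ y = b
  · rw [G.adj_comm, H.adj_comm]
    exact hpair y x hy
  push Not at hx hy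
  exact hrest x y hx.1 hx.2 hy.1 hy.2

section
variable {V : Type*} (G : SimpleGraph V)

theorem localComplement_adj_of_ne (v : V) {x y : V} (hxy : x ≠ y) :
    (localComplement G v).Adj x y ↔ Xor (G.Adj x y) (G.Adj v x ∧ G.Adj v y) :=
  and_iff_right hxy

theorem localComplement_adj_self_left (v x : V) :
    (localComplement G v).Adj v x ↔ G.Adj v x := by
  rcases eq_or_ne v x with rfl | hvx
  · simp
  · simp [localComplement_adj_of_ne G v hvx, xor_comm]

theorem localComplement_adj_self_right (v x : V) :
    (localComplement G v).Adj x v ↔ G.Adj x v := by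
  rw [SimpleGraph.adj_comm, localComplement_adj_self_left, G.adj_comm]

theorem pivot_adj_of_ne (a b : V) {x y : V} (hxy : x ≠ y) :
    (pivot G a b).Adj x y ↔ Xor (G.Adj x y) (pivotToggle G a b x y) :=
  and_iff_right hxy

theorem pivot_adj_left (a b y : V) : (pivot G a b).Adj a y ↔ G.Adj a y := by
  rcases eq_or_ne a y with rfl | hay
  · simp
  · simp [pivot_adj_of_ne G a b hay, pivotToggle, xor_comm]

theorem pivot_adj_right (a b y : V) : (pivot G a b).Adj b y ↔ G.Adj b y := by
  rcases eq_or_ne b y with rfl | hby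
  · simp
  · simp [pivot_adj_of_ne G a b hby, pivotToggle, xor_comm]

theorem pivotToggle_iff {a b x y : V} (hxa : x ≠ a) (hxb : x ≠ b) (hya : y ≠ a) (hyb : y ≠ b) :
    pivotToggle G a b x y ↔ Xor (G.Adj a x ∧ G.Adj b y) (G.Adj b x ∧ G.Adj a y) := by
  simp only [pivotToggle, hxa, hxb, hya, hyb, ne_eq, not_false_eq_true, true_and]
  grind

variable {G} {a b : V}

theorem localComplement_localComplement_adj_left [DecidableEq V] (hab : G.Adj a b) (y : V) :
    (localComplement (localComplement G a) b).Adj a y ↔ G.Adj b (Equiv.swap a b y) := by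
  rcases eq_or_ne y a with rfl | hya
  · simp
  rcases eq_or_ne y b with rfl | hyb
  · rw [Equiv.swap_apply_right, localComplement_adj_self_right, localComplement_adj_self_left]
    exact iff_of_true hab hab.symm
  rw [Equiv.swap_apply_of_ne_of_ne hya hyb, localComplement_adj_of_ne _ _ hya.symm,
    localComplement_adj_self_left, localComplement_adj_self_right,
    localComplement_adj_of_ne _ _ hyb.symm]
  simp only [hab, hab.symm, true_and]
  grind

theorem localComplement_triple_adj_left [DecidableEq V] (hab : G.Adj a b) (y : V) :
    (localComplement (localComplement (localComplement G a) b) a).Adj a y ↔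
      G.Adj b (Equiv.swap a b y) :=
  (localComplement_adj_self_left _ a y).trans (localComplement_localComplement_adj_left hab y)

theorem localComplement_triple_adj_right [DecidableEq V] (hab : G.Adj a b) (y : V) :
    (localComplement (localComplement (localComplement G a) b) a).Adj b y ↔
      G.Adj a (Equiv.swap a b y) := by
  rcases eq_or_ne y b with rfl | hyb
  · simp
  rcases eq_or_ne y a with rfl | hya
  · rw [SimpleGraph.adj_comm, localComplement_triple_adj_left hab, Equiv.swap_apply_left,
      Equiv.swap_apply_right, G.adj_comm]
  have hG2 := localComplement_localComplement_adj_left hab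
  rw [Equiv.swap_apply_of_ne_of_ne hya hyb, localComplement_adj_of_ne _ _ hyb.symm, hG2, hG2,
    Equiv.swap_apply_right, Equiv.swap_apply_of_ne_of_ne hya hyb, localComplement_adj_self_left,
    localComplement_adj_of_ne _ _ hyb.symm]
  simp only [hab, hab.symm, true_and]
  grind

theorem localComplement_triple_adj_of_ne (hab : G.Adj a b) {x y : V} (hxy : x ≠ y)
    (hxa : x ≠ a) (hxb : x ≠ b) (hya : y ≠ a) (hyb : y ≠ b) :
    (localComplement (localComplement (localComplement G a) b) a).Adj x y ↔
      Xor (G.Adj x y) (Xor (G.Adj a x ∧ G.Adj b y) (G.Adj b x ∧ G.Adj a y)) := by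
  classical
  have hG2 := localComplement_localComplement_adj_left hab
  rw [localComplement_adj_of_ne _ _ hxy, hG2, hG2, Equiv.swap_apply_of_ne_of_ne hxa hxb,
    Equiv.swap_apply_of_ne_of_ne hya hyb, localComplement_adj_of_ne _ _ hxy,
    localComplement_adj_of_ne _ _ hxy, localComplement_adj_of_ne _ _ hxb.symm,
    localComplement_adj_of_ne _ _ hyb.symm]
  grind

end

/-- For a simple graph `G` with an edge `ab` (no loops, since `G` is simple),
the pivot `G^{ab}` with the labels of `a` and `b` swapped equals the triple
local complement `G * a * b * a = ((G*a)*b)*a`. -/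
theorem pivot_swap_eq_triple_localComplement {V : Type*} [DecidableEq V]
    (G : SimpleGraph V) (a b : V) (hab : G.Adj a b) :
    swapLabels (pivot G a b) a b =
      localComplement (localComplement (localComplement G a) b) a := by
  refine SimpleGraph.ext_of_adj_pair a b (fun y => ?_) (fun y => ?_) fun x y hxa hxb hya hyb => ?_
  · simp only [swapLabels, Equiv.swap_apply_left, pivot_adj_right,
      localComplement_triple_adj_left hab]
  · simp only [swapLabels, Equiv.swap_apply_right, pivot_adj_left,
      localComplement_triple_adj_right hab]
  · simp only [swapLabels, Equiv.swap_apply_of_ne_of_ne hxa hxb,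
      Equiv.swap_apply_of_ne_of_ne hya hyb]
    rcases eq_or_ne x y with rfl | hxy
    · simp
    rw [pivot_adj_of_ne _ _ _ hxy, pivotToggle_iff _ hxa hxb hya hyb,
      localComplement_triple_adj_of_ne hab hxy hxa hxb hya hyb]
end

section
/- For any simple graph G with at least one vertex, q_N(G;0) = 0. -/
/-! Over `GF(2)` the adjacency matrix of `G` and all its principal submatrices are alternating
(`vᵀ A v = 0` for every `v`), and an alternating matrix over a field has even rank: a nonzero
entry `A i j` yields an invertible `2 × 2` principal block, whose Schur complement is again
alternating and has rank `rank A - 2`. Hence `(-1) ^ n(G[T]) = (-1) ^ |T|`, and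
`q_N(G; 0) = ∑_T (-1) ^ |T|` vanishes because `V` is nonempty. -/

/-- The GF(2)-nullity of the principal submatrix of `A` indexed by `T`. -/
noncomputable def nullityOn {V : Type*} [Fintype V] [DecidableEq V]
    (A : Matrix V V (ZMod 2)) (T : Finset V) : ℕ :=
  T.card - (A.submatrix (fun i : {x // x ∈ T} => (i : V)) (fun i : {x // x ∈ T} => (i : V))).rank

/-- The interlace polynomial `q_N(G;x) = ∑_{T ⊆ V(G)} (x-1)^{n(G[T])}`,
evaluated at the integer `x`. -/
noncomputable def interlace {V : Type*} [Fintype V] [DecidableEq V]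
    (G : SimpleGraph V) [DecidableRel G.Adj] (x : ℤ) : ℤ :=
  ∑ T : Finset V, (x - 1) ^ nullityOn (G.adjMatrix (ZMod 2)) T

def Submodule.prodEquivProd {R M N : Type*} [Semiring R] [AddCommMonoid M] [AddCommMonoid N]
    [Module R M] [Module R N] (p : Submodule R M) (q : Submodule R N) :
    p.prod q ≃ₗ[R] p × q where
  toFun x := (⟨x.1.1, x.2.1⟩, ⟨x.1.2, x.2.2⟩)
  invFun x := ⟨(x.1, x.2), x.1.2, x.2.2⟩
  map_add' _ _ := rfl
  map_smul' _ _ := rfl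

namespace Matrix

variable {R K : Type*} {m n : Type*} [Fintype m] [Fintype n]

def IsAlt [CommRing R] (A : Matrix n n R) : Prop := ∀ v : n → R, v ⬝ᵥ A *ᵥ v = 0

section CommRing
variable [CommRing R]

theorem isAlt_iff [DecidableEq n] {A : Matrix n n R} :
    A.IsAlt ↔ Aᵀ = -A ∧ ∀ i, A i i = 0 := by
  constructor
  · intro hA
    have hdiag : ∀ i, A i i = 0 := fun i => by
      simpa using hA (Pi.single i 1)
    refine ⟨?_, hdiag⟩
    ext i j
    have hij := hA (Pi.single i 1 + Pi.single j 1)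
    simp only [mulVec_add, mulVec_single, MulOpposite.op_one, one_smul, dotProduct_add,
      add_dotProduct, single_dotProduct, col_apply, hdiag, one_mul, zero_add, add_zero] at hij
    simpa [eq_neg_iff_add_eq_zero, add_comm] using hij
  · rintro ⟨hskew, hdiag⟩ v
    have hswap : ∀ i j, A j i = -A i j := fun i j => by
      rw [← transpose_apply A i j, hskew, neg_apply]
    simp only [dotProduct, mulVec, Finset.mul_sum]
    rw [← Fintype.sum_prod_type' (f := fun i j => v i * (A i j * v j))]
    refine Finset.sum_ninvolution Prod.swap (fun p => ?_) (fun p hp => ?_)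
      (fun _ => Finset.mem_univ _) Prod.swap_swap
    · simp only [Prod.fst_swap, Prod.snd_swap, hswap p.1 p.2]
      ring
    · obtain ⟨i, j⟩ := p
      intro hfix
      obtain rfl : j = i := congrArg Prod.fst hfix
      simp [hdiag] at hp

theorem IsAlt.submatrix [DecidableEq m] [DecidableEq n] {A : Matrix n n R} (hA : A.IsAlt)
    (f : m → n) : (A.submatrix f f).IsAlt := by
  rw [isAlt_iff] at hA ⊢
  exact ⟨by rw [transpose_submatrix, hA.1]; rfl, fun i => hA.2 (f i)⟩

theorem IsAlt.schur_complement₁₁ [DecidableEq m] {A : Matrix m m R} {B : Matrix m n R}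
    {C : Matrix n m R} {D : Matrix n n R} [Invertible A] (h : (fromBlocks A B C D).IsAlt) :
    (D - C * ⅟A * B).IsAlt := by
  intro v
  have hu : A *ᵥ (-(⅟A * B) *ᵥ v) = -(B *ᵥ v) := by
    rw [mulVec_mulVec, Matrix.mul_neg, Matrix.mul_invOf_cancel_left, neg_mulVec]
  have := h (Sum.elim (-(⅟A * B) *ᵥ v) v)
  rw [fromBlocks_mulVec, Sum.elim_comp_inl, Sum.elim_comp_inr, hu, neg_add_cancel,
    sumElim_dotProduct_sumElim, dotProduct_zero, zero_add] at this
  rw [← this, mulVec_mulVec, Matrix.mul_neg, neg_mulVec, dotProduct_add, dotProduct_neg,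
    sub_mulVec, dotProduct_sub, Matrix.mul_assoc]
  abel

theorem IsAlt.det_submatrix_pair [DecidableEq n] {A : Matrix n n R} (hA : A.IsAlt) (i j : n) :
    (A.submatrix ![i, j] ![i, j]).det = A i j ^ 2 := by
  obtain ⟨hskew, hdiag⟩ := isAlt_iff.mp hA
  have hji : A j i = -A i j := by rw [← transpose_apply A i j, hskew, neg_apply]
  rw [det_fin_two]
  simp [hdiag, hji, sq]

end CommRing

section Field
variable [Field K]

theorem rank_fromBlocks_zero₁₂_zero₂₁ {l o : Type*} [Fintype l] [Fintype o]
    (A : Matrix l m K) (D : Matrix o n K) : (fromBlocks A 0 0 D).rank = A.rank + D.rank := by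
  let e₁ := LinearEquiv.sumArrowLequivProdArrow m n K K
  let e₂ := LinearEquiv.sumArrowLequivProdArrow l o K K
  have hM : (fromBlocks A 0 0 D).mulVecLin =
      e₂.symm.toLinearMap ∘ₗ (A.mulVecLin.prodMap D.mulVecLin) ∘ₗ e₁.toLinearMap := by
    ext x i
    cases i <;> simp [e₁, e₂, fromBlocks_mulVec] <;> rfl
  rw [rank, rank, rank, hM, LinearMap.range_comp,
    LinearMap.range_comp_of_range_eq_top _ e₁.range, LinearEquiv.finrank_map_eq,
    LinearMap.range_prodMap, (Submodule.prodEquivProd _ _).finrank_eq, Module.finrank_prod]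

theorem rank_fromBlocks_of_invertible₁₁ {l : Type*} [Fintype l] [DecidableEq l] [DecidableEq m]
    [DecidableEq n] (A : Matrix m m K) (B : Matrix m n K) (C : Matrix l m K) (D : Matrix l n K)
    [Invertible A] : (fromBlocks A B C D).rank = A.rank + (D - C * ⅟A * B).rank := by
  have hL : IsUnit (fromBlocks 1 0 (C * ⅟A) 1 : Matrix (m ⊕ l) (m ⊕ l) K).det := by simp
  have hU : IsUnit (fromBlocks 1 (⅟A * B) 0 1 : Matrix (m ⊕ n) (m ⊕ n) K).det := by simp
  rw [fromBlocks_eq_of_invertible₁₁, rank_mul_eq_left_of_isUnit_det _ _ hU,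
    rank_mul_eq_right_of_isUnit_det _ _ hL, rank_fromBlocks_zero₁₂_zero₂₁]

theorem IsAlt.exists_rank_eq_card_add [DecidableEq m] [DecidableEq n] {A : Matrix n n K}
    (hA : A.IsAlt) {p : m → n} (hp : p.Injective) (hdet : IsUnit (A.submatrix p p).det) :
    ∃ S : Matrix {k // k ∉ Set.range p} {k // k ∉ Set.range p} K,
      S.IsAlt ∧ A.rank = Fintype.card m + S.rank := by
  let e := ((Equiv.ofInjective p hp).sumCongr (Equiv.refl _)).trans (Equiv.sumCompl _)
  obtain ⟨B, C, D, hM⟩ : ∃ B C D, A.submatrix e e = fromBlocks (A.submatrix p p) B C D :=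
    ⟨_, _, _, (fromBlocks_toBlocks _).symm⟩
  let := invertibleOfIsUnitDet _ hdet
  refine ⟨D - C * ⅟(A.submatrix p p) * B, (hM ▸ hA.submatrix e).schur_complement₁₁, ?_⟩
  rw [← rank_submatrix A e e, hM, rank_fromBlocks_of_invertible₁₁,
    rank_of_isUnit _ ((isUnit_iff_isUnit_det _).mpr hdet)]

theorem IsAlt.even_rank [DecidableEq n] {A : Matrix n n K} (hA : A.IsAlt) : Even A.rank := by
  induction hcard : Fintype.card n using Nat.strong_induction_on generalizing n with
  | _ N ih =>
    by_cases hA0 : A = 0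
    · simp [hA0]
    obtain ⟨i, j, hij⟩ : ∃ i j, A i j ≠ 0 := by
      by_contra! h
      exact hA0 (Matrix.ext h)
    have hne : i ≠ j := by
      rintro rfl
      exact hij ((isAlt_iff.mp hA).2 i)
    have hp : Function.Injective ![i, j] := by
      intro a b
      fin_cases a <;> fin_cases b <;> simp [hne, hne.symm]
    have hdet : IsUnit (A.submatrix ![i, j] ![i, j]).det := by
      rw [hA.det_submatrix_pair]
      exact (pow_ne_zero 2 hij).isUnit
    obtain ⟨S, hS, hrank⟩ := hA.exists_rank_eq_card_add hp hdet
    have hSlt : Fintype.card {k // k ∉ Set.range ![i, j]} < N := by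
      rw [Fintype.card_subtype_compl, Set.card_range_of_injective hp, Fintype.card_fin]
      have := Fintype.card_pos_iff.mpr ⟨i⟩
      omega
    rw [hrank, Fintype.card_fin]
    exact even_two.add (ih _ hSlt hS rfl)

end Field

end Matrix

theorem SimpleGraph.isAlt_adjMatrix {V R : Type*} [Fintype V] [DecidableEq V] (G : SimpleGraph V)
    [DecidableRel G.Adj] [CommRing R] [CharP R 2] : (G.adjMatrix R).IsAlt := by
  rw [Matrix.isAlt_iff, SimpleGraph.transpose_adjMatrix]
  exact ⟨by ext i j; exact (CharTwo.neg_eq _).symm, fun i => by simp⟩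

theorem neg_one_pow_nullityOn {V : Type*} [Fintype V] [DecidableEq V] {A : Matrix V V (ZMod 2)}
    (hA : A.IsAlt) (T : Finset V) : (-1 : ℤ) ^ nullityOn A T = (-1) ^ T.card := by
  let M := A.submatrix (fun i : {x // x ∈ T} => (i : V)) (fun i : {x // x ∈ T} => (i : V))
  have hle : M.rank ≤ T.card := by simpa using M.rank_le_card_width
  calc (-1 : ℤ) ^ nullityOn A T = (-1) ^ (T.card - M.rank) * (-1) ^ M.rank := by
        rw [(hA.submatrix _).even_rank.neg_one_pow, mul_one]
        rfl
    _ = (-1) ^ T.card := by rw [← pow_add, Nat.sub_add_cancel hle]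

/-- For any simple graph `G` with at least one vertex, `q_N(G;0) = 0`. -/
theorem interlace_eval_zero {V : Type*} [Fintype V] [DecidableEq V]
    (G : SimpleGraph V) [DecidableRel G.Adj] (h : 1 ≤ Fintype.card V) :
    interlace G 0 = 0 := by
  have hV : (Finset.univ : Finset V).Nonempty :=
    Finset.univ_nonempty_iff.mpr (Fintype.card_pos_iff.mp h)
  calc interlace G 0 = ∑ T ∈ (Finset.univ : Finset V).powerset, (-1 : ℤ) ^ T.card := by
        rw [interlace, Finset.powerset_univ, zero_sub]
        exact Finset.sum_congr rfl fun T _ => neg_one_pow_nullityOn G.isAlt_adjMatrix T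
    _ = 0 := Finset.sum_powerset_neg_one_pow_card_of_nonempty hV
end

section
/- For a simple graph G with n ≥ 1 vertices, the interlace polynomial q_N(G;x) has no constant term (i.e., its constant coefficient is zero). -/
/-!
At `x = 0` the term of `T` is `(-1) ^ n(G[T])`. Over GF(2) the adjacency matrix of `G[T]` is
symmetric with zero diagonal, hence alternating, and alternating forms have even rank: if
`β x y ≠ 0`, the common kernel of `β x` and `β y` is a complement of `span {x, y}` carrying the
same radical, so induction strips off two dimensions at a time. Thus `(-1) ^ n(G[T]) = (-1) ^ |T|`,
and the constant term is `∑_T (-1) ^ |T| = 0` as soon as `V` is nonempty.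
-/

open Module LinearMap

namespace LinearMap.IsAlt

variable {K V : Type*} [Field K] [AddCommGroup V] [Module K V] {β : V →ₗ[K] V →ₗ[K] K}

lemma exists_prod_apply_eq (hβ : β.IsAlt) {x y : V} (hxy : β x y ≠ 0) (p : K × K) :
    ∃ a b : K, (β x).prod (β y) (a • x + b • y) = p := by
  refine ⟨-p.2 / β x y, p.1 / β x y, ?_⟩
  simp [hβ.self_eq_zero, ← hβ.neg x y, hxy]

lemma map_subtype_ker_compl₁₂ (hβ : β.IsAlt) {x y : V} (hxy : β x y ≠ 0) :
    (ker (β.compl₁₂ (ker ((β x).prod (β y))).subtype (ker ((β x).prod (β y))).subtype)).map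
      (ker ((β x).prod (β y))).subtype = ker β := by
  set U := ker ((β x).prod (β y))
  ext z
  constructor
  · rintro ⟨u, hu, rfl⟩
    have hux : β x u = 0 ∧ β y u = 0 := by simpa [U] using u.2
    refine LinearMap.ext fun v => ?_
    obtain ⟨a, b, hab⟩ := exists_prod_apply_eq hβ hxy ((β x).prod (β y) v)
    have hvU : v - (a • x + b • y) ∈ U := by rw [mem_ker, map_sub, hab, sub_self]
    have hspan : β u (a • x + b • y) = 0 := by simp [← hβ.neg _ (u : V), hux]
    have hcompl : β u (v - (a • x + b • y)) = 0 := LinearMap.congr_fun hu ⟨_, hvU⟩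
    calc β u v = β u (v - (a • x + b • y)) + β u (a • x + b • y) := by
          rw [← map_add, sub_add_cancel]
      _ = 0 := by rw [hcompl, hspan, add_zero]
  · intro hz
    rw [mem_ker] at hz
    have hzU : z ∈ U := by simp [U, ← hβ.neg z, hz]
    exact ⟨⟨z, hzU⟩, LinearMap.ext fun u => by simp [hz], rfl⟩

lemma finrank_ker_prod_add_two [FiniteDimensional K V] (hβ : β.IsAlt) {x y : V}
    (hxy : β x y ≠ 0) : finrank K (ker ((β x).prod (β y))) + 2 = finrank K V := by
  have hrange : range ((β x).prod (β y)) = ⊤ := range_eq_top.mpr fun p =>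
    let ⟨_, _, h⟩ := exists_prod_apply_eq hβ hxy p; ⟨_, h⟩
  rw [← finrank_range_add_finrank_ker ((β x).prod (β y)), hrange, finrank_top, finrank_prod,
    finrank_self, add_comm]

theorem even_finrank_sub_finrank_ker [FiniteDimensional K V] (hβ : β.IsAlt) :
    Even (finrank K V - finrank K (ker β)) := by
  induction hV : finrank K V using Nat.strong_induction_on generalizing V with
  | _ d ih =>
  by_cases hβ0 : β = 0
  · rw [hβ0, ker_zero, finrank_top, hV, Nat.sub_self]
    exact Even.zero
  obtain ⟨x, y, hxy⟩ : ∃ x y, β x y ≠ 0 := by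
    by_contra! h
    exact hβ0 (LinearMap.ext₂ h)
  set U := ker ((β x).prod (β y))
  set βU := β.compl₁₂ U.subtype U.subtype
  have hU : finrank K U + 2 = d := hV ▸ finrank_ker_prod_add_two hβ hxy
  have hker : finrank K (ker βU) = finrank K (ker β) := by
    rw [← map_subtype_ker_compl₁₂ hβ hxy, Submodule.finrank_map_subtype_eq]
  have hle : finrank K (ker βU) ≤ finrank K U := Submodule.finrank_le _
  have hβU : βU.IsAlt := fun u => hβ u
  rw [← hker, ← hU, show finrank K U + 2 - finrank K (ker βU) =
    finrank K U - finrank K (ker βU) + 2 by omega]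
  exact (ih _ (by omega) hβU rfl).add even_two

end LinearMap.IsAlt

namespace Matrix

variable {n : Type*} [Fintype n] [DecidableEq n]

lemma isAlt_toBilin' {R : Type*} [CommRing R] {A : Matrix n n R} (hA : Aᵀ = -A)
    (hd : ∀ i, A i i = 0) : (toBilin' A).IsAlt := by
  intro x
  rw [toBilin'_apply, ← Finset.sum_product']
  refine Finset.sum_involution (fun p _ => p.swap) (fun ⟨i, j⟩ _ => ?_) (fun ⟨i, j⟩ _ hne => ?_)
    (by simp) (by simp)
  · have : A j i = -A i j := congrFun (congrFun hA i) j
    simp only [Prod.swap_prod_mk, this]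
    ring
  · intro hswap
    obtain rfl : j = i := (Prod.mk.inj hswap).1
    simp [hd] at hne

theorem even_rank_of_isAlt {K : Type*} [Field K] {A : Matrix n n K}
    (hA : (toBilin' A).IsAlt) : Even A.rank := by
  have hflip : (toBilin' A).flip.IsAlt := hA
  have hker : ker (toBilin' A).flip = ker A.mulVecLin := by
    ext v
    simp only [mem_ker, LinearMap.ext_iff, LinearMap.BilinForm.flip_apply, toBilin'_apply',
      LinearMap.zero_apply, mulVecLin_apply, dotProduct_comm _ (A *ᵥ v)]
    exact dotProduct_eq_zero_iff
  have := hflip.even_finrank_sub_finrank_ker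
  rwa [hker, ← A.mulVecLin.finrank_range_add_finrank_ker, Nat.add_sub_cancel] at this

end Matrix

theorem SimpleGraph.even_rank_adjMatrix_submatrix {V W : Type*} [Fintype W] [DecidableEq W]
    (G : SimpleGraph V) [DecidableRel G.Adj] (f : W → V) :
    Even ((G.adjMatrix (ZMod 2)).submatrix f f).rank :=
  Matrix.even_rank_of_isAlt <| Matrix.isAlt_toBilin'
    (by rw [Matrix.transpose_submatrix, G.transpose_adjMatrix]; ext; simp [ZMod.neg_eq_self_mod_two])
    (by simp)

lemma neg_one_pow_nullityOn_adjMatrix {V : Type*} [Fintype V] [DecidableEq V]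
    (G : SimpleGraph V) [DecidableRel G.Adj] (T : Finset V) :
    (-1 : ℤ) ^ nullityOn (G.adjMatrix (ZMod 2)) T = (-1) ^ T.card := by
  set A := (G.adjMatrix (ZMod 2)).submatrix (fun i : T => (i : V)) (fun i : T => (i : V))
  have hle : A.rank ≤ T.card := (A.rank_le_card_width).trans_eq (Fintype.card_coe T)
  have heven : Even A.rank := G.even_rank_adjMatrix_submatrix _
  exact neg_one_pow_congr <| (Nat.even_sub hle).trans <| iff_true_right heven

/-- The interlace polynomial of a simple graph with at least one vertex has
zero constant coefficient. -/
theorem interlace_constant_term {V : Type*} [Fintype V] [DecidableEq V]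
    (G : SimpleGraph V) [DecidableRel G.Adj] (h : 1 ≤ Fintype.card V) :
    (∑ T : Finset V,
        ((Polynomial.X : Polynomial ℤ) - 1) ^ nullityOn (G.adjMatrix (ZMod 2)) T).coeff 0
      = 0 := by
  simp_rw [Polynomial.finsetSum_coeff, Polynomial.coeff_zero_eq_eval_zero, Polynomial.eval_pow,
    Polynomial.eval_sub, Polynomial.eval_X, Polynomial.eval_one, zero_sub,
    neg_one_pow_nullityOn_adjMatrix, ← Finset.powerset_univ]
  exact Finset.sum_powerset_neg_one_pow_card_of_nonempty
    (Finset.univ_nonempty_iff.mpr (Fintype.card_pos_iff.mp h))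
end

section
/- If a is a looped vertex of a graph G, then the two-variable interlace polynomial satisfies q(G;x,y) = q(G\a;x,y) + (x-1)·q(G*a\a;x,y). -/
/-- The GF(2)-rank of the principal submatrix of `A` indexed by `T`. -/
noncomputable def rankOn {V : Type*} [Fintype V] [DecidableEq V]
    (A : Matrix V V (ZMod 2)) (T : Finset V) : ℕ :=
  (A.submatrix (fun i : {x // x ∈ T} => (i : V)) (fun i : {x // x ∈ T} => (i : V))).rank

/-- The two-variable interlace polynomial
`q(G;x,y) = ∑_{T ⊆ V} (x-1)^{r(G[T])} (y-1)^{n(G[T])}` of the graph with GF(2)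
adjacency matrix `A`, evaluated at integers `x, y`. -/
noncomputable def interlace2 {V : Type*} [Fintype V] [DecidableEq V]
    (A : Matrix V V (ZMod 2)) (x y : ℤ) : ℤ :=
  ∑ T : Finset V, (x - 1) ^ rankOn A T * (y - 1) ^ nullityOn A T

/-- The local complement `G * a` of a looped graph, in adjacency matrix form:
toggle all entries (edges and loops) among vertices of `N(a)`. -/
def locCompM {V : Type*} [Fintype V] [DecidableEq V]
    (A : Matrix V V (ZMod 2)) (a : V) : Matrix V V (ZMod 2) :=
  Matrix.of fun x y => if x ≠ a ∧ y ≠ a then A x y + A x a * A a y else A x y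

/-- Deletion of the vertex `a`: the principal submatrix on `V \ {a}`. -/
def deleteM {V : Type*} [Fintype V] [DecidableEq V]
    (A : Matrix V V (ZMod 2)) (a : V) : Matrix {v // v ≠ a} {v // v ≠ a} (ZMod 2) :=
  A.submatrix Subtype.val Subtype.val



open Matrix Module

section BlockRank

variable {R : Type*} [Field R] {m n : Type*} [Fintype m] [Fintype n] [DecidableEq m] [DecidableEq n]

/-- A product of submodules is linearly equivalent to the product of the submodules. -/
def submoduleProdLEquiv {M N : Type*} [AddCommGroup M] [AddCommGroup N] [Module R M] [Module R N]
    (p : Submodule R M) (q : Submodule R N) : (p.prod q) ≃ₗ[R] p × q where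
  toFun x := (⟨x.1.1, x.2.1⟩, ⟨x.1.2, x.2.2⟩)
  invFun x := ⟨(x.1.1, x.2.1), ⟨x.1.2, x.2.2⟩⟩
  map_add' _ _ := rfl
  map_smul' _ _ := rfl
  left_inv _ := rfl
  right_inv _ := rfl

lemma range_prodMap' {M₁ M₂ N₁ N₂ : Type*} [AddCommGroup M₁] [AddCommGroup M₂]
    [AddCommGroup N₁] [AddCommGroup N₂] [Module R M₁] [Module R M₂] [Module R N₁] [Module R N₂]
    (f : M₁ →ₗ[R] N₁) (g : M₂ →ₗ[R] N₂) :
    LinearMap.range (f.prodMap g) = (LinearMap.range f).prod (LinearMap.range g) := by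
  ext ⟨u, w⟩
  simp only [LinearMap.mem_range, Submodule.mem_prod, LinearMap.prodMap_apply, Prod.ext_iff]
  constructor
  · rintro ⟨⟨c, d⟩, h1, h2⟩
    exact ⟨⟨c, h1⟩, ⟨d, h2⟩⟩
  · rintro ⟨⟨c, hc⟩, ⟨d, hd⟩⟩
    exact ⟨(c, d), hc, hd⟩

lemma rank_fromBlocks_diag (B : Matrix m m R) (C : Matrix n n R) :
    (Matrix.fromBlocks B 0 0 C).rank = B.rank + C.rank := by
  classical
  set e := LinearEquiv.sumArrowLequivProdArrow m n R R with he
  have key : (Matrix.fromBlocks B 0 0 C).mulVecLin =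
      e.symm.toLinearMap ∘ₗ ((B.mulVecLin.prodMap C.mulVecLin) ∘ₗ e.toLinearMap) := by
    apply LinearMap.ext; intro v
    funext i
    have hv : v = Sum.elim (v ∘ Sum.inl) (v ∘ Sum.inr) := by
      funext j; cases j <;> rfl
    rw [Matrix.mulVecLin_apply, hv, Matrix.fromBlocks_mulVec B 0 0 C]
    cases i <;>
      simp [e, LinearEquiv.sumArrowLequivProdArrow, Equiv.sumArrowEquivProdArrow,
        Matrix.mulVecLin_apply]
  rw [Matrix.rank, key, LinearMap.range_comp, LinearMap.range_comp, LinearEquiv.range,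
    Submodule.map_top, LinearEquiv.finrank_map_eq, range_prodMap']
  rw [(submoduleProdLEquiv _ _).finrank_eq, Module.finrank_prod]
  rfl

end BlockRank

section Pivot

variable {R : Type*} [Field R] {ι : Type*} [Fintype ι] [DecidableEq ι]

lemma rank_fromBlocks_one_pivot (B12 : Matrix Unit ι R) (B21 : Matrix ι Unit R)
    (B22 : Matrix ι ι R) :
    (Matrix.fromBlocks (1 : Matrix Unit Unit R) B12 B21 B22).rank
      = 1 + (B22 - B21 * B12).rank := by
  haveI : Invertible (1 : Matrix Unit Unit R) := invertibleOne
  rw [Matrix.fromBlocks_eq_of_invertible₁₁ (1 : Matrix Unit Unit R) B12 B21 B22]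
  rw [Matrix.rank_mul_eq_left_of_isUnit_det _ _
    (by simp [Matrix.det_fromBlocks_zero₂₁] : IsUnit (Matrix.fromBlocks 1 (⅟(1 : Matrix Unit Unit R) * B12) 0 1).det)]
  rw [Matrix.rank_mul_eq_right_of_isUnit_det _ _
    (by simp [Matrix.det_fromBlocks_zero₁₂] : IsUnit (Matrix.fromBlocks 1 0 (B21 * ⅟(1 : Matrix Unit Unit R)) 1).det)]
  rw [rank_fromBlocks_diag]
  simp [invOf_one]

end Pivot

section Graph

variable {V : Type*} [Fintype V] [DecidableEq V]

/-- Equivalence between a finset of a subtype and its image under the subtype embedding. -/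
def finMapEquiv (a : V) (S : Finset {v : V // v ≠ a}) :
    {x // x ∈ S} ≃ {y // y ∈ S.map (Function.Embedding.subtype _)} where
  toFun x := ⟨x.1.1, Finset.mem_map_of_mem _ x.2⟩
  invFun y := ⟨⟨y.1, Finset.property_of_mem_map_subtype S y.2⟩, by
    obtain ⟨x, hx, hxy⟩ := Finset.mem_map.1 y.2
    have : x = ⟨y.1, Finset.property_of_mem_map_subtype S y.2⟩ := Subtype.ext hxy
    exact this ▸ hx⟩
  left_inv x := Subtype.ext (Subtype.ext rfl)
  right_inv y := rfl

lemma rankOn_map (a : V) (B : Matrix V V (ZMod 2)) (S : Finset {v : V // v ≠ a}) :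
    rankOn B (S.map (Function.Embedding.subtype _)) = rankOn (deleteM B a) S := by
  unfold rankOn
  rw [← Matrix.rank_submatrix (B.submatrix _ _) (finMapEquiv a S) (finMapEquiv a S)]
  rfl

lemma nullityOn_map (a : V) (B : Matrix V V (ZMod 2)) (S : Finset {v : V // v ≠ a}) :
    nullityOn B (S.map (Function.Embedding.subtype _)) = nullityOn (deleteM B a) S := by
  unfold nullityOn
  rw [Finset.card_map,
    ← Matrix.rank_submatrix (B.submatrix _ _) (finMapEquiv a S) (finMapEquiv a S)]
  rfl

/-- Equivalence `Unit ⊕ (S.map emb) ≃ insert a (S.map emb)`. -/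
def insEquiv (a : V) (S : Finset {v : V // v ≠ a}) :
    Unit ⊕ {y // y ∈ S.map (Function.Embedding.subtype _)} ≃
      {z // z ∈ insert a (S.map (Function.Embedding.subtype (fun v : V => v ≠ a)))} where
  toFun := Sum.elim (fun _ => ⟨a, Finset.mem_insert_self a _⟩)
    (fun y => ⟨y.1, Finset.mem_insert_of_mem y.2⟩)
  invFun z := if h : z.1 = a then Sum.inl () else
    Sum.inr ⟨z.1, (Finset.mem_insert.1 z.2).resolve_left h⟩
  left_inv := by
    rintro (⟨⟩ | y)
    · simp
    · have hy : (y.1 : V) ≠ a := Finset.property_of_mem_map_subtype S y.2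
      simp [hy]
  right_inv z := by
    by_cases h : z.1 = a
    · simp only [h, dif_pos]
      exact Subtype.ext h.symm
    · simp only [h, dif_neg, not_false_iff]
      rfl

lemma rankOn_insert (a : V) (A : Matrix V V (ZMod 2)) (ha : A a a = 1)
    (S : Finset {v : V // v ≠ a}) :
    rankOn A (insert a (S.map (Function.Embedding.subtype _)))
      = 1 + rankOn (locCompM A a) (S.map (Function.Embedding.subtype _)) := by
  classical
  have h1 : rankOn A (insert a (S.map (Function.Embedding.subtype _))) =
      (Matrix.fromBlocks (1 : Matrix Unit Unit (ZMod 2))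
        (Matrix.of fun (_ : Unit) (j : {y // y ∈ S.map (Function.Embedding.subtype _)}) => A a j.1)
        (Matrix.of fun (i : {y // y ∈ S.map (Function.Embedding.subtype _)}) (_ : Unit) => A i.1 a)
        (A.submatrix (fun i : {y // y ∈ S.map (Function.Embedding.subtype _)} => (i.1 : V))
          (fun i => (i.1 : V)))).rank := by
    unfold rankOn
    rw [← Matrix.rank_submatrix (A.submatrix _ _) (insEquiv a S) (insEquiv a S)]
    congr 1
    ext i j
    rcases i with i | i <;> rcases j with j | j <;>
      simp [insEquiv, Matrix.fromBlocks, ha, Matrix.one_apply]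
  rw [h1, rank_fromBlocks_one_pivot]
  congr 1
  unfold rankOn
  congr 1
  ext i j
  have hi : (i.1 : V) ≠ a := Finset.property_of_mem_map_subtype S i.2
  have hj : (j.1 : V) ≠ a := Finset.property_of_mem_map_subtype S j.2
  simp [Matrix.sub_apply, Matrix.mul_apply, locCompM, hi, hj, CharTwo.sub_eq_add]

end Graph


section Main

variable {V : Type*} [Fintype V] [DecidableEq V]

lemma nullityOn_eq_rankOn {A : Matrix V V (ZMod 2)} {T : Finset V} :
    nullityOn A T = T.card - rankOn A T := rfl

lemma notMem_map_emb (a : V) (S : Finset {v : V // v ≠ a}) :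
    a ∉ S.map (Function.Embedding.subtype (fun v : V => v ≠ a)) :=
  fun h => Finset.property_of_mem_map_subtype S h rfl

lemma subtype_map_emb (a : V) (S : Finset {v : V // v ≠ a}) :
    (S.map (Function.Embedding.subtype (fun v : V => v ≠ a))).subtype (fun v => v ≠ a) = S := by
  ext z
  simp only [Finset.mem_subtype, Finset.mem_map, Function.Embedding.coe_subtype]
  constructor
  · rintro ⟨w, hw, hwz⟩
    rwa [show w = z from Subtype.ext hwz] at hw
  · intro hz
    exact ⟨z, hz, rfl⟩

lemma rankOn_le_card (B : Matrix V V (ZMod 2)) (T : Finset V) : rankOn B T ≤ T.card := by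
  unfold rankOn
  simpa [Fintype.card_coe] using
    Matrix.rank_le_card_width (B.submatrix (fun i : {x // x ∈ T} => (i : V))
      (fun i : {x // x ∈ T} => (i : V)))

lemma nullityOn_insert (a : V) (A : Matrix V V (ZMod 2)) (ha : A a a = 1)
    (S : Finset {v : V // v ≠ a}) :
    nullityOn A (insert a (S.map (Function.Embedding.subtype _)))
      = nullityOn (deleteM (locCompM A a) a) S := by
  have hr := rankOn_insert a A ha S
  have hmap := rankOn_map a (locCompM A a) S
  have hcard : (insert a (S.map (Function.Embedding.subtype (fun v : V => v ≠ a)))).card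
      = S.card + 1 := by
    rw [Finset.card_insert_of_notMem (notMem_map_emb a S), Finset.card_map]
  have hle : rankOn (deleteM (locCompM A a) a) S ≤ S.card := by
    have := rankOn_le_card (locCompM A a) (S.map (Function.Embedding.subtype _))
    rw [hmap, Finset.card_map] at this
    exact this
  rw [nullityOn_eq_rankOn, nullityOn_eq_rankOn, hcard, hr, hmap]
  omega

end Main


/-- If `a` is a looped vertex of `G`, then
`q(G;x,y) = q(G \ a;x,y) + (x-1)·q(G*a \ a;x,y)`. -/
theorem interlace2_loop_recurrence {V : Type*} [Fintype V] [DecidableEq V]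
    (A : Matrix V V (ZMod 2)) (hA : A.IsSymm) (a : V) (ha : A a a = 1) (x y : ℤ) :
    interlace2 A x y =
      interlace2 (deleteM A a) x y + (x - 1) * interlace2 (deleteM (locCompM A a) a) x y := by

  classical
  set f : Finset V → ℤ := fun T => (x - 1) ^ rankOn A T * (y - 1) ^ nullityOn A T with hf
  have split : interlace2 A x y =
      (∑ T ∈ Finset.univ.filter (fun T : Finset V => a ∈ T), f T)
        + ∑ T ∈ Finset.univ.filter (fun T : Finset V => a ∉ T), f T := by
    rw [interlace2]
    exact (Finset.sum_filter_add_sum_filter_not _ _ _).symm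
  have h1 : ∑ T ∈ Finset.univ.filter (fun T : Finset V => a ∉ T), f T
      = interlace2 (deleteM A a) x y := by
    rw [interlace2]
    refine Finset.sum_nbij' (fun T => T.subtype (fun v => v ≠ a))
      (fun S => S.map (Function.Embedding.subtype _)) (fun _ _ => Finset.mem_univ _)
      ?_ ?_ ?_ ?_
    · intro S _
      simp only [Finset.mem_filter, Finset.mem_univ, true_and]
      exact notMem_map_emb a S
    · intro T hT
      have haT : a ∉ T := (Finset.mem_filter.1 hT).2
      exact Finset.subtype_map_of_mem (fun z hz => ne_of_mem_of_not_mem hz haT)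
    · intro S _
      exact subtype_map_emb a S
    · intro T hT
      have haT : a ∉ T := (Finset.mem_filter.1 hT).2
      have hT' : (T.subtype (fun v => v ≠ a)).map (Function.Embedding.subtype _) = T :=
        Finset.subtype_map_of_mem (fun z hz => ne_of_mem_of_not_mem hz haT)
      simp only [hf]
      conv_lhs => rw [← hT']
      rw [rankOn_map, nullityOn_map]
  have h2 : ∑ T ∈ Finset.univ.filter (fun T : Finset V => a ∈ T), f T
      = (x - 1) * interlace2 (deleteM (locCompM A a) a) x y := by
    rw [interlace2, Finset.mul_sum]
    refine Finset.sum_nbij' (fun T => (T.erase a).subtype (fun v => v ≠ a))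
      (fun S => insert a (S.map (Function.Embedding.subtype _))) (fun _ _ => Finset.mem_univ _)
      ?_ ?_ ?_ ?_
    · intro S _
      simp only [Finset.mem_filter, Finset.mem_univ, true_and]
      exact Finset.mem_insert_self a _
    · intro T hT
      have haT : a ∈ T := (Finset.mem_filter.1 hT).2
      rw [Finset.subtype_map_of_mem (fun z hz => (Finset.mem_erase.1 hz).1),
        Finset.insert_erase haT]
    · intro S _
      rw [Finset.erase_insert (notMem_map_emb a S), subtype_map_emb a S]
    · intro T hT
      have haT : a ∈ T := (Finset.mem_filter.1 hT).2
      have hT' : insert a (((T.erase a).subtype (fun v => v ≠ a)).map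
          (Function.Embedding.subtype _)) = T := by
        rw [Finset.subtype_map_of_mem (fun z hz => (Finset.mem_erase.1 hz).1),
          Finset.insert_erase haT]
      simp only [hf]
      conv_lhs => rw [← hT']
      rw [rankOn_insert a A ha, rankOn_map, nullityOn_insert a A ha, pow_add, pow_one,
        mul_assoc]
  rw [split, h1, h2]
  ring
end

section
/- Let A be an n×n matrix over a field F and T a subset of indices such that the principal submatrix A[T] is invertible. Then the principal pivot transform A*T is the unique matrix such that for all vectors x, y: y = Ax if and only if (A*T)u = v, where u agrees with y on coordinates in T and with x elsewhere, and v agrees with x on coordinates in T and with y elsewhere. -/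
open Matrix

/-- The principal pivot transform `A * T` of a square matrix `A` on the set
`T = {i | p i}` of indices: writing `A` in block form `(P Q; R S)` with
`P = A[T]`, the principal pivot transform is
`(P⁻¹, -P⁻¹Q; RP⁻¹, S - RP⁻¹Q)`. -/
noncomputable def ppt {V : Type*} [Fintype V] [DecidableEq V] {F : Type*} [Field F]
    (A : Matrix V V F) (p : V → Prop) [DecidablePred p] : Matrix V V F :=
  let P := A.submatrix (fun i : {x // p x} => (i : V)) (fun i : {x // p x} => (i : V))
  let Q := A.submatrix (fun i : {x // p x} => (i : V)) (fun i : {x // ¬ p x} => (i : V))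
  let R := A.submatrix (fun i : {x // ¬ p x} => (i : V)) (fun i : {x // p x} => (i : V))
  let S := A.submatrix (fun i : {x // ¬ p x} => (i : V)) (fun i : {x // ¬ p x} => (i : V))
  (Matrix.fromBlocks P⁻¹ (-(P⁻¹ * Q)) (R * P⁻¹) (S - R * P⁻¹ * Q)).submatrix
    (Equiv.sumCompl p).symm (Equiv.sumCompl p).symm

/-!
Reorder the indices so that `T` comes first. Then `y = A x` is the block system
`P x₁ + Q x₂ = y₁`, `R x₁ + S x₂ = y₂`; since `P` is invertible, the first equation says
`x₁ = P⁻¹ y₁ - P⁻¹ Q x₂`, and substituting this into the second gives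
`y₂ = R P⁻¹ y₁ + (S - R P⁻¹ Q) x₂`. These two equations are `(A * T) (y₁, x₂) = (x₁, y₂)`.
Uniqueness holds because every vector `u` is the exchanged vector `(y₁, x₂)` of some
solution of `y = A x`, so the property determines `B u` for every `u`.
-/

namespace Matrix

section BlockPivot

variable {m n α : Type*} [Fintype m] [Fintype n] [DecidableEq m] [CommRing α]

noncomputable def blockPivot (P : Matrix m m α) (Q : Matrix m n α) (R : Matrix n m α)
    (S : Matrix n n α) : Matrix (m ⊕ n) (m ⊕ n) α :=
  fromBlocks P⁻¹ (-(P⁻¹ * Q)) (R * P⁻¹) (S - R * P⁻¹ * Q)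

theorem mulVec_eq_iff_eq_nonsing_inv_mulVec {P : Matrix m m α} (hP : IsUnit P.det)
    {a b : m → α} : P *ᵥ a = b ↔ a = P⁻¹ *ᵥ b := by
  constructor
  · rintro rfl
    rw [mulVec_mulVec, nonsing_inv_mul P hP, one_mulVec]
  · rintro rfl
    rw [mulVec_mulVec, mul_nonsing_inv P hP, one_mulVec]

theorem fromBlocks_mulVec_eq_iff_blockPivot_mulVec_eq {P : Matrix m m α} (hP : IsUnit P.det)
    (Q : Matrix m n α) (R : Matrix n m α) (S : Matrix n n α)
    (x₁ y₁ : m → α) (x₂ y₂ : n → α) :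
    fromBlocks P Q R S *ᵥ Sum.elim x₁ x₂ = Sum.elim y₁ y₂ ↔
      blockPivot P Q R S *ᵥ Sum.elim y₁ x₂ = Sum.elim x₁ y₂ := by
  have hx₁ : P⁻¹ *ᵥ y₁ + (-(P⁻¹ * Q)) *ᵥ x₂ = P⁻¹ *ᵥ (y₁ - Q *ᵥ x₂) := by
    rw [mulVec_sub, neg_mulVec, ← mulVec_mulVec, sub_eq_add_neg]
  simp only [blockPivot, fromBlocks_mulVec, Sum.elim_comp_inl, Sum.elim_comp_inr,
    Sum.elim_eq_iff]
  rw [← eq_sub_iff_add_eq, mulVec_eq_iff_eq_nonsing_inv_mulVec hP, hx₁, eq_comm (a := x₁)]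
  refine and_congr_right fun hx => ?_
  rw [← hx, mulVec_mulVec, mulVec_sub, sub_mulVec, mulVec_mulVec, Matrix.mul_assoc]
  abel_nf

end BlockPivot

theorem mulVec_eq_iff_submatrix_mulVec_eq {ι V R : Type*} [Fintype ι] [Fintype V]
    [NonUnitalNonAssocSemiring R] (M : Matrix V V R) (e : ι ≃ V) (x y : V → R) :
    M *ᵥ x = y ↔ M.submatrix e e *ᵥ (x ∘ e) = y ∘ e := by
  rw [submatrix_mulVec_equiv, Function.comp_assoc, e.self_comp_symm, Function.comp_id]
  exact e.surjective.injective_comp_right.eq_iff.symm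

theorem eq_of_forall_mulVec_exchange_iff {V R : Type*} [Fintype V] [NonAssocSemiring R]
    {A B C : Matrix V V R} (p : V → Prop) [DecidablePred p]
    (hB : ∀ x y : V → R, A *ᵥ x = y ↔
      B *ᵥ (fun i => if p i then y i else x i) = fun i => if p i then x i else y i)
    (hC : ∀ x y : V → R, A *ᵥ x = y ↔
      C *ᵥ (fun i => if p i then y i else x i) = fun i => if p i then x i else y i) :
    B = C := by
  refine ext_iff_mulVec.2 fun u => ?_
  let v := C *ᵥ u
  let x : V → R := fun i => if p i then v i else u i
  let y : V → R := fun i => if p i then u i else v i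
  have hu : (fun i => if p i then y i else x i) = u := by
    funext i; by_cases hi : p i <;> simp [x, y, hi]
  have hv : (fun i => if p i then x i else y i) = v := by
    funext i; by_cases hi : p i <;> simp [x, y, hi]
  have hAxy : A *ᵥ x = y := (hC x y).2 (by rw [hu, hv])
  simpa only [hu, hv] using (hB x y).1 hAxy

end Matrix

section PrincipalPivot

variable {V : Type*} (p : V → Prop) [DecidablePred p]

theorem comp_sumCompl {β : Type*} (f : V → β) :
    f ∘ Equiv.sumCompl p =
      Sum.elim (fun i : {x // p x} => f i) (fun i : {x // ¬ p x} => f i) := by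
  funext i; cases i <;> rfl

theorem ite_comp_sumCompl {β : Type*} (f g : V → β) :
    (fun i => if p i then f i else g i) ∘ Equiv.sumCompl p =
      Sum.elim (fun i : {x // p x} => f i) (fun i : {x // ¬ p x} => g i) := by
  rw [comp_sumCompl]
  congr 1 <;> funext i <;> simp [i.2]

theorem submatrix_sumCompl {R : Type*} (A : Matrix V V R) :
    A.submatrix (Equiv.sumCompl p) (Equiv.sumCompl p) =
      fromBlocks (A.submatrix (↑) (↑)) (A.submatrix (↑) (↑)) (A.submatrix (↑) (↑))
        (A.submatrix (↑) (↑)) := by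
  ext (i | i) (j | j) <;> rfl

variable {F : Type*} [Fintype V] [DecidableEq V] [Field F]

theorem ppt_submatrix_sumCompl (A : Matrix V V F) :
    (ppt A p).submatrix (Equiv.sumCompl p) (Equiv.sumCompl p) =
      blockPivot (A.submatrix (↑) (↑)) (A.submatrix (↑) (↑)) (A.submatrix (↑) (↑))
        (A.submatrix (↑) (↑)) := by
  simp [ppt, blockPivot, submatrix_submatrix]

theorem mulVec_eq_iff_ppt_mulVec_eq {A : Matrix V V F}
    (h : IsUnit (A.submatrix (fun i : {x // p x} => (i : V)) (fun i : {x // p x} => (i : V))).det)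
    (x y : V → F) :
    A *ᵥ x = y ↔
      ppt A p *ᵥ (fun i => if p i then y i else x i) = fun i => if p i then x i else y i := by
  rw [mulVec_eq_iff_submatrix_mulVec_eq A (Equiv.sumCompl p),
    mulVec_eq_iff_submatrix_mulVec_eq (ppt A p) (Equiv.sumCompl p), submatrix_sumCompl,
    ppt_submatrix_sumCompl, comp_sumCompl, comp_sumCompl, ite_comp_sumCompl, ite_comp_sumCompl]
  exact fromBlocks_mulVec_eq_iff_blockPivot_mulVec_eq h _ _ _ _ _ _ _

end PrincipalPivot

/-- If `A[T]` is invertible, then the principal pivot transform `A * T` is the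
unique matrix `B` such that for all vectors `x, y`: `y = Ax` iff `Bu = v`,
where `u` agrees with `y` on `T` and with `x` elsewhere, and `v` agrees with
`x` on `T` and with `y` elsewhere. -/
theorem ppt_unique_partial_inverse {V : Type*} [Fintype V] [DecidableEq V]
    {F : Type*} [Field F] (A : Matrix V V F) (p : V → Prop) [DecidablePred p]
    (h : IsUnit (A.submatrix (fun i : {x // p x} => (i : V))
      (fun i : {x // p x} => (i : V))).det) :
    ∀ B : Matrix V V F,
      B = ppt A p ↔
        ∀ x y : V → F,
          A.mulVec x = y ↔
            B.mulVec (fun i => if p i then y i else x i) =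
              (fun i => if p i then x i else y i) := by
  intro B
  constructor
  · rintro rfl
    exact mulVec_eq_iff_ppt_mulVec_eq p h
  · intro hB
    exact eq_of_forall_mulVec_exchange_iff p hB (mulVec_eq_iff_ppt_mulVec_eq p h)
end

section
/- Let A be a V×V matrix over a field F, T ⊆ V with A[T] invertible, and v ∈ T. Then the matrix interlace polynomial satisfies q_m(A;x) = q_m(A\v;x) + q_m((A*T)\v;x), where A\v denotes the principal submatrix obtained by removing row and column v. -/
open Matrix
open scoped symmDiff

/-- The nullity of the principal submatrix of `A` indexed by `S`. -/
noncomputable def nullityF {V : Type*} [Fintype V] [DecidableEq V] {F : Type*} [Field F]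
    (A : Matrix V V F) (S : Finset V) : ℕ :=
  S.card - (A.submatrix (fun i : {x // x ∈ S} => (i : V)) (fun i : {x // x ∈ S} => (i : V))).rank

/-- The interlace polynomial `q_m(A;x) = ∑_{S ⊆ V} (x-1)^{n(A[S])}` of a square
matrix `A` over a field, evaluated at the integer `x`. -/
noncomputable def qm {V : Type*} [Fintype V] [DecidableEq V] {F : Type*} [Field F]
    (A : Matrix V V F) (x : ℤ) : ℤ :=
  ∑ S : Finset V, (x - 1) ^ nullityF A S

/-- Deletion of the index `v`: the principal submatrix on `V \ {v}`. -/
def deleteF {V : Type*} [Fintype V] [DecidableEq V] {F : Type*} [Field F]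
    (A : Matrix V V F) (v : V) : Matrix {u // u ≠ v} {u // u ≠ v} F :=
  A.submatrix Subtype.val Subtype.val


section InterlaceAux
set_option linter.unusedSectionVars false
open scoped symmDiff
variable {V : Type*} [Fintype V] [DecidableEq V] {F : Type*} [Field F]


def kSpace (M : Matrix V V F) (S : Finset V) : Submodule F (V → F) where
  carrier := {w | (∀ i ∉ S, w i = 0) ∧ ∀ i ∈ S, (M *ᵥ w) i = 0}
  add_mem' := by
    rintro a b ⟨ha1, ha2⟩ ⟨hb1, hb2⟩
    refine ⟨fun i hi => by simp [ha1 i hi, hb1 i hi], fun i hi => ?_⟩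
    rw [Matrix.mulVec_add]; simp [ha2 i hi, hb2 i hi]
  zero_mem' := ⟨fun i _ => rfl, fun i _ => by simp⟩
  smul_mem' := by
    rintro c a ⟨ha1, ha2⟩
    refine ⟨fun i hi => by simp [ha1 i hi], fun i hi => ?_⟩
    rw [Matrix.mulVec_smul]; simp [ha2 i hi]

lemma mem_kSpace {M : Matrix V V F} {S : Finset V} {w : V → F} :
    w ∈ kSpace M S ↔ (∀ i ∉ S, w i = 0) ∧ ∀ i ∈ S, (M *ᵥ w) i = 0 := Iff.rfl

def extFun (S : Finset V) (w : {x // x ∈ S} → F) : V → F :=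
  fun i => if h : i ∈ S then w ⟨i, h⟩ else 0

/-- principal submatrix on S -/
def subM (M : Matrix V V F) (S : Finset V) : Matrix {x // x ∈ S} {x // x ∈ S} F :=
  M.submatrix (fun i : {x // x ∈ S} => (i : V)) (fun i : {x // x ∈ S} => (i : V))

lemma mulVec_extFun (M : Matrix V V F) (S : Finset V) (w : {x // x ∈ S} → F) (i : V) :
    (M *ᵥ extFun S w) i = ∑ j : {x // x ∈ S}, M i j * w j := by
  rw [Matrix.mulVec, dotProduct, Finset.univ_eq_attach]
  calc ∑ j : V, M i j * extFun S w j
      = ∑ j ∈ S, M i j * extFun S w j := by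
        symm
        apply Finset.sum_subset (Finset.subset_univ S)
        intro j _ hj
        simp [extFun, hj]
    _ = ∑ j ∈ S.attach, M i (j : V) * extFun S w (j : V) :=
        (Finset.sum_attach S (fun j => M i j * extFun S w j)).symm
    _ = ∑ j ∈ S.attach, M i (j : V) * w j :=
        Finset.sum_congr rfl fun j _ => by simp [extFun, j.2]

lemma mulVec_restrict (M : Matrix V V F) (S : Finset V) (w : V → F)
    (h0 : ∀ i ∉ S, w i = 0) (i : {x // x ∈ S}) :
    (subM M S *ᵥ fun j : {x // x ∈ S} => w j) i = (M *ᵥ w) (i : V) := by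
  rw [Matrix.mulVec, dotProduct, Matrix.mulVec, dotProduct, Finset.univ_eq_attach]
  simp only [subM, Matrix.submatrix_apply]
  rw [Finset.sum_attach S (fun j => M (i : V) j * w j)]
  apply Finset.sum_subset (Finset.subset_univ S)
  intro j _ hj
  simp [h0 j hj]

lemma extFun_mem {M : Matrix V V F} {S : Finset V} {w : {x // x ∈ S} → F}
    (hw : w ∈ LinearMap.ker (subM M S).mulVecLin) : extFun S w ∈ kSpace M S := by
  rw [LinearMap.mem_ker] at hw
  constructor
  · intro i hi; simp [extFun, hi]
  · intro i hi
    rw [mulVec_extFun]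
    have := congrFun hw ⟨i, hi⟩
    simpa [subM, Matrix.mulVecLin_apply, Matrix.mulVec, dotProduct] using this

lemma restrict_mem {M : Matrix V V F} {S : Finset V} {w : V → F}
    (hw : w ∈ kSpace M S) :
    (fun j : {x // x ∈ S} => w j) ∈ LinearMap.ker (subM M S).mulVecLin := by
  rw [LinearMap.mem_ker]
  funext i
  have := mulVec_restrict M S w hw.1 i
  simpa [Matrix.mulVecLin_apply, this] using hw.2 i i.2

noncomputable def kerEquivKSpace (M : Matrix V V F) (S : Finset V) :
    (LinearMap.ker (subM M S).mulVecLin) ≃ₗ[F] kSpace M S where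
  toFun w := ⟨extFun S w.1, extFun_mem w.2⟩
  invFun w := ⟨fun j => w.1 j, restrict_mem w.2⟩
  map_add' a b := by ext i; by_cases h : i ∈ S <;> simp [extFun, h]
  map_smul' c a := by ext i; by_cases h : i ∈ S <;> simp [extFun, h]
  left_inv w := by ext j; simp [extFun, j.2]
  right_inv w := by
    ext i; simp only [extFun]
    split
    · rfl
    · exact (w.2.1 i ‹_›).symm

lemma nullityF_eq_finrank_kSpace (M : Matrix V V F) (S : Finset V) :
    nullityF M S = Module.finrank F (kSpace M S) := by
  have hrn := LinearMap.finrank_range_add_finrank_ker (subM M S).mulVecLin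
  have hcard : Module.finrank F ({x // x ∈ S} → F) = S.card := by
    simp [Module.finrank_pi]
  rw [hcard] at hrn
  have hker : Module.finrank F (LinearMap.ker (subM M S).mulVecLin)
      = Module.finrank F (kSpace M S) := (kerEquivKSpace M S).finrank_eq
  have hrank : (subM M S).rank = Module.finrank F (LinearMap.range (subM M S).mulVecLin) := rfl
  show S.card - (subM M S).rank = _
  omega

/-- the pivot swap map: replaces coordinates in `p` by the output of `M`. -/
def phiFun (M : Matrix V V F) (p : V → Prop) [DecidablePred p] (w : V → F) : V → F :=
  fun i => if p i then (M *ᵥ w) i else w i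

def phi (M : Matrix V V F) (p : V → Prop) [DecidablePred p] : (V → F) →ₗ[F] (V → F) where
  toFun := phiFun M p
  map_add' a b := by
    funext i; by_cases h : p i <;> simp [phiFun, h, Matrix.mulVec_add]
  map_smul' c a := by
    funext i; by_cases h : p i <;> simp [phiFun, h, Matrix.mulVec_smul]

/-- split a mulVec entry over the partition given by `p` -/
lemma mulVec_split (M : Matrix V V F) (p : V → Prop) [DecidablePred p] (w : V → F) (i : V) :
    (M *ᵥ w) i = (∑ a : {x // p x}, M i a * w a) + ∑ b : {x // ¬ p x}, M i b * w b := by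
  rw [Matrix.mulVec, dotProduct,
    ← Equiv.sum_comp (Equiv.sumCompl p) (fun j => M i j * w j), Fintype.sum_sum_type]
  rfl

/-- The key graph identity: `(A*T) *ᵥ (phi A p w) = phi-complement`. -/
lemma ppt_mulVec_phi (A : Matrix V V F) (p : V → Prop) [DecidablePred p]
    (h : IsUnit (A.submatrix (fun i : {x // p x} => (i : V))
      (fun i : {x // p x} => (i : V))).det) (w : V → F) :
    (ppt A p) *ᵥ (phiFun A p w) = fun i => if p i then w i else (A *ᵥ w) i := by
  set P := A.submatrix (fun i : {x // p x} => (i : V)) (fun i : {x // p x} => (i : V)) with hP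
  set Q := A.submatrix (fun i : {x // p x} => (i : V)) (fun i : {x // ¬ p x} => (i : V)) with hQ
  set R := A.submatrix (fun i : {x // ¬ p x} => (i : V)) (fun i : {x // p x} => (i : V)) with hR
  set S := A.submatrix (fun i : {x // ¬ p x} => (i : V)) (fun i : {x // ¬ p x} => (i : V)) with hS
  set e := Equiv.sumCompl p with he
  set aT : {x // p x} → F := fun a => w a with haT
  set bT : {x // ¬ p x} → F := fun b => w b with hbT
  have huT : (fun a : {x // p x} => (A *ᵥ w) (a : V)) = P *ᵥ aT + Q *ᵥ bT := by
    funext a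
    rw [mulVec_split A p w]
    rfl
  have huB : (fun b : {x // ¬ p x} => (A *ᵥ w) (b : V)) = R *ᵥ aT + S *ᵥ bT := by
    funext b
    rw [mulVec_split A p w]
    rfl
  have hcomp : phiFun A p w ∘ e = Sum.elim (P *ᵥ aT + Q *ᵥ bT) bT := by
    funext s
    cases s with
    | inl a =>
      have : p (e (Sum.inl a)) := a.2
      simp only [Function.comp_apply, phiFun, if_pos this]
      exact congrFun huT a
    | inr b =>
      have : ¬ p (e (Sum.inr b)) := b.2
      simp only [Function.comp_apply, phiFun, if_neg this]
      rfl
  have key : (ppt A p) *ᵥ (phiFun A p w)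
      = (Matrix.fromBlocks P⁻¹ (-(P⁻¹ * Q)) (R * P⁻¹) (S - R * P⁻¹ * Q)
          *ᵥ (phiFun A p w ∘ e)) ∘ e.symm := by
    rw [ppt]
    exact Matrix.submatrix_mulVec_equiv _ _ _ _
  funext i
  rw [key]
  have hi : i = e (e.symm i) := (e.apply_symm_apply i).symm
  rcases hsi : e.symm i with a | b
  · have hpi : p i := by rw [hi, hsi]; exact a.2
    simp only [Function.comp_apply, hsi, if_pos hpi]
    rw [hcomp, Matrix.fromBlocks_mulVec]
    simp only [Sum.elim_inl, Sum.elim_comp_inl, Sum.elim_comp_inr]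
    have : P⁻¹ *ᵥ (P *ᵥ aT + Q *ᵥ bT) + (-(P⁻¹ * Q)) *ᵥ bT = aT := by
      rw [Matrix.mulVec_add, Matrix.mulVec_mulVec, Matrix.mulVec_mulVec,
        Matrix.nonsing_inv_mul P h, Matrix.one_mulVec, Matrix.neg_mulVec]
      abel
    rw [this]
    show aT a = w i
    rw [hi, hsi]; rfl
  · have hpi : ¬ p i := by rw [hi, hsi]; exact b.2
    simp only [Function.comp_apply, hsi, if_neg hpi]
    rw [hcomp, Matrix.fromBlocks_mulVec]
    simp only [Sum.elim_inr, Sum.elim_comp_inl, Sum.elim_comp_inr]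
    have : (R * P⁻¹) *ᵥ (P *ᵥ aT + Q *ᵥ bT) + (S - R * P⁻¹ * Q) *ᵥ bT
        = R *ᵥ aT + S *ᵥ bT := by
      rw [Matrix.mulVec_add, Matrix.mulVec_mulVec, Matrix.mulVec_mulVec,
        Matrix.sub_mulVec]
      have h1 : R * P⁻¹ * P = R := by
        rw [Matrix.mul_assoc, Matrix.nonsing_inv_mul P h, Matrix.mul_one]
      rw [h1]
      abel
    rw [this]
    have : (A *ᵥ w) i = (R *ᵥ aT + S *ᵥ bT) b := by
      rw [hi, hsi]
      exact congrFun huB b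
    rw [this]

@[simp] lemma phi_apply (M : Matrix V V F) (p : V → Prop) [DecidablePred p] (w : V → F) :
    phi M p w = phiFun M p w := rfl

lemma phiFun_comp (A : Matrix V V F) (p : V → Prop) [DecidablePred p]
    (h : IsUnit (A.submatrix (fun i : {x // p x} => (i : V))
      (fun i : {x // p x} => (i : V))).det) (w : V → F) :
    phiFun (ppt A p) p (phiFun A p w) = w := by
  funext i
  by_cases hi : p i
  · simp only [phiFun, if_pos hi, ppt_mulVec_phi A p h w]
  · simp only [phiFun, if_neg hi]

lemma phi_bijective (A : Matrix V V F) (p : V → Prop) [DecidablePred p]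
    (h : IsUnit (A.submatrix (fun i : {x // p x} => (i : V))
      (fun i : {x // p x} => (i : V))).det) :
    Function.Bijective (phi (F := F) A p) := by
  have hinj : Function.Injective (phi (F := F) A p) := by
    apply Function.LeftInverse.injective (g := phiFun (ppt A p) p)
    intro w
    rw [phi_apply]
    exact phiFun_comp A p h w
  exact ⟨hinj, (LinearMap.injective_iff_surjective).mp hinj⟩

lemma phiFun_surj (A : Matrix V V F) (p : V → Prop) [DecidablePred p]
    (h : IsUnit (A.submatrix (fun i : {x // p x} => (i : V))
      (fun i : {x // p x} => (i : V))).det) (w' : V → F) :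
    ∃ w, phiFun A p w = w' := by
  obtain ⟨w, hw⟩ := (phi_bijective A p h).2 w'
  exact ⟨w, by rwa [phi_apply] at hw⟩

lemma mulVec_phi_ppt (A : Matrix V V F) (p : V → Prop) [DecidablePred p]
    (h : IsUnit (A.submatrix (fun i : {x // p x} => (i : V))
      (fun i : {x // p x} => (i : V))).det) (w' : V → F) :
    A *ᵥ (phiFun (ppt A p) p w') = fun i => if p i then w' i else ((ppt A p) *ᵥ w') i := by
  obtain ⟨w, rfl⟩ := phiFun_surj A p h w'
  rw [phiFun_comp A p h w, ppt_mulVec_phi A p h w]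
  funext i
  by_cases hi : p i <;> simp only [phiFun, if_pos, if_neg, hi, if_true, if_false, ite_true,
    ite_false]

lemma phiFun_comp' (A : Matrix V V F) (p : V → Prop) [DecidablePred p]
    (h : IsUnit (A.submatrix (fun i : {x // p x} => (i : V))
      (fun i : {x // p x} => (i : V))).det) (w' : V → F) :
    phiFun A p (phiFun (ppt A p) p w') = w' := by
  obtain ⟨w, rfl⟩ := phiFun_surj A p h w'
  rw [phiFun_comp A p h w]

/-- generic membership transfer along a swap-graph identity -/
lemma phiFun_mem_kSpace {A B : Matrix V V F} {p : V → Prop} [DecidablePred p]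
    (hg : ∀ w, B *ᵥ phiFun A p w = fun i => if p i then w i else (A *ᵥ w) i)
    {S : Finset V} {w : V → F} (hw : w ∈ kSpace A S) :
    phiFun A p w ∈ kSpace B (S ∆ (Finset.univ.filter p)) := by
  rw [mem_kSpace] at hw ⊢
  have hT : ∀ i, i ∈ Finset.univ.filter p ↔ p i := by intro i; simp
  constructor
  · intro i hi
    rw [Finset.mem_symmDiff] at hi
    push_neg at hi
    by_cases hp : p i
    · have hiS : i ∈ S := hi.2 ((hT i).mpr hp)
      simpa [phiFun, hp] using hw.2 i hiS
    · have hiS : i ∉ S := fun hS => hp ((hT i).mp (hi.1 hS))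
      simpa [phiFun, hp] using hw.1 i hiS
  · intro i hi
    rw [hg w]
    rw [Finset.mem_symmDiff] at hi
    by_cases hp : p i
    · have hiS : i ∉ S := by
        rcases hi with ⟨_, hiT⟩ | ⟨_, hiS⟩
        · exact absurd ((hT i).mpr hp) hiT
        · exact hiS
      simpa [hp] using hw.1 i hiS
    · have hiS : i ∈ S := by
        rcases hi with ⟨hiS, _⟩ | ⟨hiT, _⟩
        · exact hiS
        · exact absurd ((hT i).mp hiT) hp
      simpa [hp] using hw.2 i hiS

lemma nullityF_ppt (A : Matrix V V F) (p : V → Prop) [DecidablePred p]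
    (h : IsUnit (A.submatrix (fun i : {x // p x} => (i : V))
      (fun i : {x // p x} => (i : V))).det) (S : Finset V) :
    nullityF (ppt A p) (S ∆ (Finset.univ.filter p)) = nullityF A S := by
  rw [nullityF_eq_finrank_kSpace, nullityF_eq_finrank_kSpace]
  refine (LinearEquiv.finrank_eq ?_).symm
  refine LinearEquiv.ofSubmodules (LinearEquiv.ofBijective (phi A p) (phi_bijective A p h))
    _ _ ?_
  apply le_antisymm
  · rintro w' ⟨w, hw, rfl⟩
    simp only [LinearEquiv.coe_coe, LinearEquiv.ofBijective_apply, phi_apply]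
    exact phiFun_mem_kSpace (ppt_mulVec_phi A p h) hw
  · intro w' hw'
    refine ⟨phiFun (ppt A p) p w', ?_, ?_⟩
    · have := phiFun_mem_kSpace (A := ppt A p) (B := A) (p := p)
        (mulVec_phi_ppt A p h) hw'
      rwa [symmDiff_symmDiff_cancel_right] at this
    · simp only [LinearEquiv.coe_coe, LinearEquiv.ofBijective_apply, phi_apply]
      exact phiFun_comp' A p h w'

lemma nullityF_deleteF (M : Matrix V V F) (v : V) (S' : Finset {u : V // u ≠ v}) :
    nullityF (deleteF M v) S' = nullityF M (S'.map (Function.Embedding.subtype _)) := by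
  have hcard : (S'.map (Function.Embedding.subtype _)).card = S'.card := Finset.card_map _
  have hne : ∀ y : V, y ∈ S'.map (Function.Embedding.subtype (· ≠ v)) → y ≠ v := by
    intro y hy
    obtain ⟨a, _, ha⟩ := Finset.mem_map.mp hy
    exact ha ▸ a.2
  let e : {x : {u : V // u ≠ v} // x ∈ S'} ≃
      {x : V // x ∈ S'.map (Function.Embedding.subtype (· ≠ v))} :=
  { toFun := fun x => ⟨x.1.1, Finset.mem_map_of_mem _ x.2⟩
    invFun := fun y => ⟨⟨y.1, hne y.1 y.2⟩, by
      obtain ⟨a, haS, ha⟩ := Finset.mem_map.mp y.2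
      have : (⟨y.1, hne y.1 y.2⟩ : {u : V // u ≠ v}) = a := Subtype.ext ha.symm
      rwa [this]⟩
    left_inv := fun x => by ext; rfl
    right_inv := fun y => rfl }
  have hM : (deleteF M v).submatrix
        (fun i : {x : {u : V // u ≠ v} // x ∈ S'} => (i : {u : V // u ≠ v}))
        (fun i : {x : {u : V // u ≠ v} // x ∈ S'} => (i : {u : V // u ≠ v}))
      = ((M.submatrix
          (fun i : {x : V // x ∈ S'.map (Function.Embedding.subtype (· ≠ v))} => (i : V))
          (fun i : {x : V // x ∈ S'.map (Function.Embedding.subtype (· ≠ v))} => (i : V)))).submatrix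
          e e := rfl
  rw [nullityF, nullityF, hcard, hM, Matrix.rank_submatrix]

lemma qm_deleteF (M : Matrix V V F) (v : V) (x : ℤ) :
    qm (deleteF M v) x
      = ∑ S ∈ Finset.univ.filter (fun S : Finset V => v ∉ S), (x - 1) ^ nullityF M S := by
  rw [qm]
  refine Finset.sum_nbij' (fun S' => S'.map (Function.Embedding.subtype _))
    (fun S => S.subtype (· ≠ v)) ?_ ?_ ?_ ?_ ?_
  · intro S' _
    simp only [Finset.mem_filter, Finset.mem_univ, true_and]
    intro hvm
    obtain ⟨a, _, ha⟩ := Finset.mem_map.mp hvm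
    exact a.2 ha
  · intro S _; exact Finset.mem_univ _
  · intro S' _
    ext a
    simp [Finset.mem_subtype, Finset.mem_map, Subtype.coe_injective.eq_iff]
  · intro S hS
    simp only [Finset.mem_filter, Finset.mem_univ, true_and] at hS
    show Finset.map _ (Finset.subtype _ S) = S
    rw [Finset.subtype_map]
    exact Finset.filter_eq_self.mpr fun a ha => fun hav => hS (hav ▸ ha)
  · intro S' _
    rw [nullityF_deleteF]


end InterlaceAux

/-- If `A[T]` is invertible and `v ∈ T`, then
`q_m(A;x) = q_m(A \ v;x) + q_m((A*T) \ v;x)`. -/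
theorem qm_recurrence {V : Type*} [Fintype V] [DecidableEq V]
    {F : Type*} [Field F] (A : Matrix V V F) (p : V → Prop) [DecidablePred p]
    (h : IsUnit (A.submatrix (fun i : {x // p x} => (i : V))
      (fun i : {x // p x} => (i : V))).det)
    (v : V) (hv : p v) (x : ℤ) :
    qm A x = qm (deleteF A v) x + qm (deleteF (ppt A p) v) x := by
  classical
  have hvT : v ∈ Finset.univ.filter p := Finset.mem_filter.mpr ⟨Finset.mem_univ v, hv⟩
  have hsplit : qm A x
      = (∑ S ∈ Finset.univ.filter (fun S : Finset V => v ∉ S), (x - 1) ^ nullityF A S)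
      + ∑ S ∈ Finset.univ.filter (fun S : Finset V => v ∈ S), (x - 1) ^ nullityF A S := by
    rw [qm, ← Finset.sum_filter_add_sum_filter_not Finset.univ (fun S : Finset V => v ∉ S)
      (fun S => (x - 1) ^ nullityF A S)]
    congr 2
    apply Finset.filter_congr
    intro S _
    simp [not_not]
  rw [hsplit, qm_deleteF A v x, qm_deleteF (ppt A p) v x]
  congr 1
  refine Finset.sum_nbij' (fun S => S ∆ (Finset.univ.filter p))
    (fun S => S ∆ (Finset.univ.filter p)) ?_ ?_ ?_ ?_ ?_
  · intro S hS
    simp only [Finset.mem_filter, Finset.mem_univ, true_and] at hS ⊢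
    intro hmem
    rw [Finset.mem_symmDiff] at hmem
    rcases hmem with ⟨_, hn⟩ | ⟨_, hn⟩ <;> exact hn (by assumption)
  · intro S hS
    simp only [Finset.mem_filter, Finset.mem_univ, true_and] at hS ⊢
    rw [Finset.mem_symmDiff]
    exact Or.inr ⟨hvT, hS⟩
  · intro S _
    show S ∆ _ ∆ _ = S
    exact symmDiff_symmDiff_cancel_right _ S
  · intro S _
    show S ∆ _ ∆ _ = S
    exact symmDiff_symmDiff_cancel_right _ S
  · intro S _
    rw [nullityF_ppt A p h S]
end

section
/- The family of feasible sets of the adjacency delta-matroid of a graph satisfies the symmetric exchange axiom: for a symmetric matrix A over GF(2), the set system on V with feasible sets {X ⊆ V : A[X] is invertible} (with ∅ feasible) is a delta-matroid. -/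
/-- The principal submatrix of `A` indexed by the subset `X`. -/
def psub {V : Type*} [Fintype V] [DecidableEq V]
    (A : Matrix V V (ZMod 2)) (X : Finset V) :
    Matrix {x // x ∈ X} {x // x ∈ X} (ZMod 2) :=
  A.submatrix (fun i => (i : V)) (fun i => (i : V))

namespace AdjDM

open Matrix

variable {V : Type*} [Fintype V] [DecidableEq V]

/-- Kernel-triviality formulation of feasibility of `Z`. -/
def Feas (A : Matrix V V (ZMod 2)) (Z : Finset V) : Prop :=
  ∀ v : V → ZMod 2, (∀ i, i ∉ Z → v i = 0) → (∀ i ∈ Z, A.mulVec v i = 0) → v = 0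

lemma mulVec_ext (A : Matrix V V (ZMod 2)) (Z : Finset V) (w : {x // x ∈ Z} → ZMod 2)
    (i : V) :
    A.mulVec (fun j => if h : j ∈ Z then w ⟨j, h⟩ else 0) i
      = ∑ j : {x // x ∈ Z}, A i j * w j := by
  have h1 : A.mulVec (fun j => if h : j ∈ Z then w ⟨j, h⟩ else 0) i
      = ∑ j ∈ Z, A i j * (if h : j ∈ Z then w ⟨j, h⟩ else 0) := by
    rw [Matrix.mulVec, dotProduct]
    exact (Finset.sum_subset (Finset.subset_univ Z)
      (fun j _ hj => by rw [dif_neg hj, mul_zero])).symm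
  rw [h1, Finset.sum_subtype Z (fun _ => Iff.rfl)]
  exact Finset.sum_congr rfl (fun j _ => by rw [dif_pos j.2])

lemma feas_iff (A : Matrix V V (ZMod 2)) (Z : Finset V) :
    IsUnit (psub A Z).det ↔ Feas A Z := by
  rw [isUnit_iff_ne_zero]
  constructor
  · intro hdet v hv0 hvA
    set w : {x // x ∈ Z} → ZMod 2 := fun j => v j with hw
    have hvext : v = fun j => if h : j ∈ Z then w ⟨j, h⟩ else 0 := by
      funext j
      by_cases h : j ∈ Z
      · rw [dif_pos h]
      · rw [dif_neg h]; exact hv0 j h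
    have hmul : (psub A Z).mulVec w = 0 := by
      funext i
      have : (psub A Z).mulVec w i = ∑ j : {x // x ∈ Z}, A i j * w j := rfl
      rw [this, ← mulVec_ext A Z w i, ← hvext]
      exact hvA i i.2
    have hw0 : w = 0 := by
      by_contra hne
      exact hdet (Matrix.exists_mulVec_eq_zero_iff.mp ⟨w, hne, hmul⟩)
    rw [hvext, hw0]
    funext j
    by_cases h : j ∈ Z <;> simp [h]
  · intro hF hdet
    obtain ⟨w, hw0, hmul⟩ := Matrix.exists_mulVec_eq_zero_iff.mpr hdet
    set v : V → ZMod 2 := fun j => if h : j ∈ Z then w ⟨j, h⟩ else 0 with hv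
    have hv0 : ∀ i, i ∉ Z → v i = 0 := by
      intro i hi; simp only [hv, dif_neg hi]
    have hvA : ∀ i ∈ Z, A.mulVec v i = 0 := by
      intro i hi
      rw [hv, mulVec_ext A Z w i]
      have : (psub A Z).mulVec w ⟨i, hi⟩ = 0 := by rw [hmul]; rfl
      exact this
    have := hF v hv0 hvA
    apply hw0
    funext j
    have hj : v j = 0 := by rw [this]; rfl
    simp only [hv, dif_pos j.2] at hj
    exact hj

/-- Diagonal 0/1 indicator matrix of `X`. -/
def Pm (X : Finset V) : Matrix V V (ZMod 2) :=
  Matrix.diagonal (fun i => if i ∈ X then 1 else 0)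

def Gm (A : Matrix V V (ZMod 2)) (X : Finset V) : Matrix V V (ZMod 2) :=
  Pm X * A + (1 - Pm X)

def Hm (A : Matrix V V (ZMod 2)) (X : Finset V) : Matrix V V (ZMod 2) :=
  Pm X + (1 - Pm X) * A

/-- The principal pivot transform of `A` at `X`. -/
noncomputable def Bm (A : Matrix V V (ZMod 2)) (X : Finset V) : Matrix V V (ZMod 2) :=
  Hm A X * (Gm A X)⁻¹

lemma mulVec_Gm (A : Matrix V V (ZMod 2)) (X : Finset V) (v : V → ZMod 2) (i : V) :
    (Gm A X).mulVec v i = if i ∈ X then A.mulVec v i else v i := by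
  rw [Gm, Matrix.add_mulVec, Matrix.sub_mulVec, Matrix.one_mulVec]
  have h1 : (Pm X * A).mulVec v = (Pm X).mulVec (A.mulVec v) := by
    rw [Matrix.mulVec_mulVec]
  rw [h1]
  simp only [Pm, Pi.add_apply, Pi.sub_apply, Matrix.mulVec_diagonal]
  by_cases h : i ∈ X <;> simp [h]

lemma mulVec_Hm (A : Matrix V V (ZMod 2)) (X : Finset V) (v : V → ZMod 2) (i : V) :
    (Hm A X).mulVec v i = if i ∈ X then v i else A.mulVec v i := by
  rw [Hm, Matrix.add_mulVec]
  have h1 : ((1 - Pm X) * A).mulVec v = (1 - Pm X).mulVec (A.mulVec v) :=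
    (Matrix.mulVec_mulVec _ _ _).symm
  rw [h1, Matrix.sub_mulVec, Matrix.one_mulVec]
  simp only [Pm, Pi.add_apply, Pi.sub_apply, Matrix.mulVec_diagonal]
  by_cases h : i ∈ X <;> simp [h]

lemma gm_det {A : Matrix V V (ZMod 2)} {X : Finset V} (hX : Feas A X) :
    IsUnit (Gm A X).det := by
  rw [isUnit_iff_ne_zero]
  intro h
  obtain ⟨v, hv0, hGv⟩ := Matrix.exists_mulVec_eq_zero_iff.mpr h
  apply hv0
  apply hX v
  · intro i hi
    have := congrFun hGv i
    rw [mulVec_Gm, if_neg hi] at this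
    exact this
  · intro i hi
    have := congrFun hGv i
    rw [mulVec_Gm, if_pos hi] at this
    exact this

lemma bm_mul_gm {A : Matrix V V (ZMod 2)} {X : Finset V} (hX : Feas A X) :
    Bm A X * Gm A X = Hm A X := by
  rw [Bm, mul_assoc, Matrix.nonsing_inv_mul _ (gm_det hX), mul_one]

lemma bm_mulVec {A : Matrix V V (ZMod 2)} {X : Finset V} (hX : Feas A X)
    (v : V → ZMod 2) :
    (Bm A X).mulVec ((Gm A X).mulVec v) = (Hm A X).mulVec v := by
  rw [Matrix.mulVec_mulVec, bm_mul_gm hX]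

lemma gm_cancel {A : Matrix V V (ZMod 2)} {X : Finset V} (hX : Feas A X)
    (u : V → ZMod 2) :
    (Gm A X).mulVec ((Gm A X)⁻¹.mulVec u) = u := by
  rw [Matrix.mulVec_mulVec, Matrix.mul_nonsing_inv _ (gm_det hX), Matrix.one_mulVec]

lemma gm_cancel' {A : Matrix V V (ZMod 2)} {X : Finset V} (hX : Feas A X)
    (v : V → ZMod 2) :
    (Gm A X)⁻¹.mulVec ((Gm A X).mulVec v) = v := by
  rw [Matrix.mulVec_mulVec, Matrix.nonsing_inv_mul _ (gm_det hX), Matrix.one_mulVec]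

/-- The pivot identity: feasibility for the pivoted matrix at `S` is feasibility
of `A` at `X ∆ S`. -/
lemma pivot {A : Matrix V V (ZMod 2)} {X : Finset V} (hX : Feas A X) (S : Finset V) :
    Feas (Bm A X) S ↔ Feas A (symmDiff X S) := by
  constructor
  · intro hF v hv0 hvA
    set u := (Gm A X).mulVec v with hu
    have hBu : (Bm A X).mulVec u = (Hm A X).mulVec v := bm_mulVec hX v
    have hu0 : u = 0 := by
      apply hF u
      · intro i hi
        rw [hu, mulVec_Gm]
        by_cases hiX : i ∈ X
        · rw [if_pos hiX]
          exact hvA i (Finset.mem_symmDiff.mpr (Or.inl ⟨hiX, hi⟩))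
        · rw [if_neg hiX]
          exact hv0 i (fun hmem => by
            rcases Finset.mem_symmDiff.mp hmem with ⟨h1, _⟩ | ⟨h1, _⟩
            · exact hiX h1
            · exact hi h1)
      · intro i hi
        rw [hBu, mulVec_Hm]
        by_cases hiX : i ∈ X
        · rw [if_pos hiX]
          exact hv0 i (fun hmem => by
            rcases Finset.mem_symmDiff.mp hmem with ⟨_, h2⟩ | ⟨_, h2⟩
            · exact h2 hi
            · exact h2 hiX)
        · rw [if_neg hiX]
          exact hvA i (Finset.mem_symmDiff.mpr (Or.inr ⟨hi, hiX⟩))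
    have : v = (Gm A X)⁻¹.mulVec u := (gm_cancel' hX v).symm
    rw [this, hu0, Matrix.mulVec_zero]
  · intro hF u hu0 huB
    set v := (Gm A X)⁻¹.mulVec u with hv
    have hGv : (Gm A X).mulVec v = u := gm_cancel hX u
    have hBu : (Bm A X).mulVec u = (Hm A X).mulVec v := by
      rw [← hGv, bm_mulVec hX]
    have hv0 : v = 0 := by
      apply hF v
      · intro i hi
        by_cases hiX : i ∈ X
        · -- i ∈ X, i ∉ X∆S ⇒ i ∈ S ⇒ (Bu)_i = 0 and v i = (Hv)_i = (Bu)_i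
          have hiS : i ∈ S := by
            by_contra hiS
            exact hi (Finset.mem_symmDiff.mpr (Or.inl ⟨hiX, hiS⟩))
          have := huB i hiS
          rw [hBu, mulVec_Hm, if_pos hiX] at this
          exact this
        · have hiS : i ∉ S := by
            intro hiS
            exact hi (Finset.mem_symmDiff.mpr (Or.inr ⟨hiS, hiX⟩))
          have := hu0 i hiS
          rw [← hGv, mulVec_Gm, if_neg hiX] at this
          exact this
      · intro i hi
        rcases Finset.mem_symmDiff.mp hi with ⟨hiX, hiS⟩ | ⟨hiS, hiX⟩
        · have := hu0 i hiS
          rw [← hGv, mulVec_Gm, if_pos hiX] at this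
          exact this
        · have := huB i hiS
          rw [hBu, mulVec_Hm, if_neg hiX] at this
          exact this
    rw [← hGv, hv0, Matrix.mulVec_zero]

lemma add_self_mat (M : Matrix V V (ZMod 2)) : M + M = 0 := by
  funext i j
  have : ∀ a : ZMod 2, a + a = 0 := by decide
  exact this (M i j)

lemma key_symm {A : Matrix V V (ZMod 2)} (hA : A.IsSymm) (X : Finset V) :
    (Gm A X)ᵀ * Hm A X = (Hm A X)ᵀ * Gm A X := by
  have hAT : Aᵀ = A := hA
  have hPT : (Pm X)ᵀ = Pm X := Matrix.diagonal_transpose _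
  set P := Pm X with hP
  have hPP : P * P = P := by
    have hfun : (fun i => (if i ∈ X then (1 : ZMod 2) else 0)
        * (if i ∈ X then 1 else 0)) = fun i => if i ∈ X then (1 : ZMod 2) else 0 := by
      funext i
      by_cases h : i ∈ X <;> simp [h]
    rw [hP, Pm, Matrix.diagonal_mul_diagonal, hfun]
  have hPQ : P * (1 - P) = 0 := by rw [mul_sub, mul_one, hPP, sub_self]
  have hQP : (1 - P) * P = 0 := by rw [sub_mul, one_mul, hPP, sub_self]
  have hQQ : (1 - P) * (1 - P) = 1 - P := by
    rw [mul_sub, mul_one, hQP, sub_zero]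
  have hG : (Gm A X)ᵀ = A * P + (1 - P) := by
    rw [Gm, Matrix.transpose_add, Matrix.transpose_mul, Matrix.transpose_sub,
      Matrix.transpose_one, hPT, hAT]
  have hH : (Hm A X)ᵀ = P + A * (1 - P) := by
    rw [Hm, Matrix.transpose_add, Matrix.transpose_mul, Matrix.transpose_sub,
      Matrix.transpose_one, hPT, hAT]
  have e1 : (Gm A X)ᵀ * Hm A X = A * P + (1 - P) * A := by
    rw [hG, Hm]
    calc (A * P + (1 - P)) * (P + (1 - P) * A)
        = A * (P * P) + (A * (P * (1 - P))) * A + (1 - P) * P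
            + ((1 - P) * (1 - P)) * A := by noncomm_ring
      _ = A * P + (1 - P) * A := by
          rw [hPP, hPQ, hQP, hQQ, mul_zero, zero_mul, add_zero, add_zero]
  have e2 : (Hm A X)ᵀ * Gm A X = P * A + A * (1 - P) := by
    rw [hH, Gm]
    calc (P + A * (1 - P)) * (P * A + (1 - P))
        = (P * P) * A + P * (1 - P) + (A * ((1 - P) * P)) * A
            + A * ((1 - P) * (1 - P)) := by noncomm_ring
      _ = P * A + A * (1 - P) := by
          rw [hPP, hPQ, hQP, hQQ, mul_zero, zero_mul, add_zero, add_zero]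
  rw [e1, e2]
  have h0 : A * P + (1 - P) * A - (P * A + A * (1 - P))
      = (A * P + A * P) - (P * A + P * A) := by noncomm_ring
  rw [add_self_mat, add_self_mat, sub_zero] at h0
  exact sub_eq_zero.mp h0

lemma bm_symm {A : Matrix V V (ZMod 2)} (hA : A.IsSymm) {X : Finset V}
    (hX : Feas A X) : (Bm A X)ᵀ = Bm A X := by
  have hd : IsUnit (Gm A X).det := gm_det hX
  have hdT : IsUnit ((Gm A X)ᵀ).det := by rw [Matrix.det_transpose]; exact hd
  calc (Bm A X)ᵀ = ((Gm A X)ᵀ)⁻¹ * (Hm A X)ᵀ := by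
        rw [Bm, Matrix.transpose_mul, Matrix.transpose_nonsing_inv]
    _ = ((Gm A X)ᵀ)⁻¹ * ((Hm A X)ᵀ * Gm A X * (Gm A X)⁻¹) := by
        rw [Matrix.mul_nonsing_inv_cancel_right _ _ hd]
    _ = ((Gm A X)ᵀ)⁻¹ * ((Gm A X)ᵀ * Hm A X * (Gm A X)⁻¹) := by
        rw [key_symm hA]
    _ = ((Gm A X)ᵀ)⁻¹ * (Gm A X)ᵀ * (Hm A X * (Gm A X)⁻¹) := by
        noncomm_ring
    _ = Bm A X := by rw [Matrix.nonsing_inv_mul _ hdT, one_mul, Bm]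

lemma mulVec_support_pair (M : Matrix V V (ZMod 2)) (v : V → ZMod 2) (x y : V)
    (hxy : x ≠ y) (hv : ∀ i, i ≠ x → i ≠ y → v i = 0) (i : V) :
    M.mulVec v i = M i x * v x + M i y * v y := by
  rw [Matrix.mulVec, dotProduct]
  rw [← Finset.sum_subset (Finset.subset_univ ({x, y} : Finset V))]
  · rw [Finset.sum_pair hxy]
  · intro j _ hj
    simp only [Finset.mem_insert, Finset.mem_singleton, not_or] at hj
    rw [hv j hj.1 hj.2, mul_zero]

lemma mulVec_support_single (M : Matrix V V (ZMod 2)) (v : V → ZMod 2) (x : V)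
    (hv : ∀ i, i ≠ x → v i = 0) (i : V) :
    M.mulVec v i = M i x * v x := by
  rw [Matrix.mulVec, dotProduct]
  rw [Finset.sum_eq_single x]
  · intro j _ hj
    rw [hv j hj, mul_zero]
  · intro h
    exact absurd (Finset.mem_univ x) h

end AdjDM

/-- For a symmetric matrix `A` over GF(2), the set system on `V` whose feasible
sets are the `X ⊆ V` with `A[X]` invertible (in particular `∅` is feasible) is
a delta-matroid: it satisfies the symmetric exchange axiom. -/
theorem adjacency_deltaMatroid {V : Type*} [Fintype V] [DecidableEq V]
    (A : Matrix V V (ZMod 2)) (hA : A.IsSymm) :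
    IsUnit (psub A (∅ : Finset V)).det ∧
    ∀ X Y : Finset V, IsUnit (psub A X).det → IsUnit (psub A Y).det →
      ∀ x ∈ symmDiff X Y, ∃ y ∈ symmDiff X Y,
        IsUnit (psub A (symmDiff X {x, y})).det := by
  classical
  constructor
  · haveI : IsEmpty {x // x ∈ (∅ : Finset V)} :=
      ⟨fun x => absurd x.2 (Finset.notMem_empty _)⟩
    rw [Matrix.det_isEmpty]
    exact isUnit_one
  · intro X Y hXu hYu x hx
    rw [AdjDM.feas_iff] at hXu hYu
    have hBsymm : ∀ i j, AdjDM.Bm A X i j = AdjDM.Bm A X j i := by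
      intro i j
      have := congrFun (congrFun (AdjDM.bm_symm hA hXu) i) j
      exact this.symm
    have hBZ : AdjDM.Feas (AdjDM.Bm A X) (symmDiff X Y) := by
      rw [AdjDM.pivot hXu, symmDiff_symmDiff_cancel_left]
      exact hYu
    by_cases hBxx : AdjDM.Bm A X x x = 1
    · refine ⟨x, hx, ?_⟩
      rw [AdjDM.feas_iff, ← AdjDM.pivot hXu]
      intro v hv0 hvB
      have hvx : v x = 0 := by
        have hmem : x ∈ ({x, x} : Finset V) := by simp
        have := hvB x hmem
        rw [AdjDM.mulVec_support_single (AdjDM.Bm A X) v x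
          (fun i hi => hv0 i (by simp [hi])) x, hBxx, one_mul] at this
        exact this
      funext i
      by_cases hix : i = x
      · rw [hix, hvx]; rfl
      · exact hv0 i (by simp [hix])
    · have hBxx0 : AdjDM.Bm A X x x = 0 := by
        have h01 : ∀ a : ZMod 2, a ≠ 1 → a = 0 := by decide
        exact h01 _ hBxx
      have hy : ∃ y ∈ symmDiff X Y, AdjDM.Bm A X x y = 1 := by
        by_contra h
        push_neg at h
        have h0 : ∀ y ∈ symmDiff X Y, AdjDM.Bm A X x y = 0 := by
          intro y hy
          have h01 : ∀ a : ZMod 2, a ≠ 1 → a = 0 := by decide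
          exact h01 _ (h y hy)
        have hcon := hBZ (fun i => if i = x then 1 else 0) ?_ ?_
        · have := congrFun hcon x
          simp at this
        · intro i hi
          simp only [ite_eq_right_iff]
          intro hix
          rw [hix] at hi
          exact absurd hx hi
        · intro i hi
          rw [AdjDM.mulVec_support_single (AdjDM.Bm A X) _ x
            (fun j hj => if_neg hj) i, if_pos rfl, mul_one, hBsymm i x]
          exact h0 i hi
      obtain ⟨y, hyZ, hBxy⟩ := hy
      have hyx : y ≠ x := by
        intro h
        rw [h, hBxx0] at hBxy
        exact zero_ne_one hBxy
      refine ⟨y, hyZ, ?_⟩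
      rw [AdjDM.feas_iff, ← AdjDM.pivot hXu]
      intro v hv0 hvB
      have hsupp : ∀ i, i ≠ x → i ≠ y → v i = 0 := by
        intro i h1 h2
        exact hv0 i (by simp [h1, h2])
      have hvy : v y = 0 := by
        have := hvB x (by simp)
        rw [AdjDM.mulVec_support_pair (AdjDM.Bm A X) v x y (Ne.symm hyx) hsupp x,
          hBxx0, zero_mul, zero_add, hBxy, one_mul] at this
        exact this
      have hvx : v x = 0 := by
        have := hvB y (by simp)
        rw [AdjDM.mulVec_support_pair (AdjDM.Bm A X) v x y (Ne.symm hyx) hsupp y,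
          ← hBsymm x y, hBxy, one_mul, hvy, mul_zero, add_zero] at this
        exact this
      funext i
      by_cases h1 : i = x
      · rw [h1, hvx]; rfl
      · by_cases h2 : i = y
        · rw [h2, hvy]; rfl
        · exact (hsupp i h1 h2)
end

section
/- If all feasible sets of a delta-matroid D = (E,F) have sizes of the same parity, then q_Δ(D;-1) = 0. -/
/-- The distance `d_M(X) = min{|F Δ X| : F feasible}` from a subset `X` to the
set system with feasible sets `F` (a minimum when `F` is nonempty). -/
noncomputable def distSS {α : Type*} [DecidableEq α] (F : Finset (Finset α)) (X : Finset α) : ℕ :=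
  sInf {n : ℕ | ∃ A ∈ F, n = (symmDiff A X).card}

/-- A delta-matroid on the ground set `E`: a nonempty family `F` of subsets of
`E` (the feasible sets) satisfying the symmetric exchange axiom. -/
def IsDeltaMatroid {α : Type*} [DecidableEq α] (E : Finset α) (F : Finset (Finset α)) : Prop :=
  F.Nonempty ∧ (∀ A ∈ F, A ⊆ E) ∧
    ∀ X ∈ F, ∀ Y ∈ F, ∀ x ∈ symmDiff X Y, ∃ y ∈ symmDiff X Y, symmDiff X {x, y} ∈ F

/-- The interlace polynomial `q_Δ(M;x) = ∑_{X ⊆ E} x^{d_M(X)}` of a set system,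
evaluated at the integer `x`. -/
noncomputable def qDelta {α : Type*} [DecidableEq α] (E : Finset α) (F : Finset (Finset α)) (x : ℤ) : ℤ :=
  ∑ X ∈ E.powerset, x ^ distSS F X

lemma card_symmDiff_parity {α : Type*} [DecidableEq α] (A X : Finset α) :
    (symmDiff A X).card % 2 = (A.card + X.card) % 2 := by
  have h : (symmDiff A X).card + 2 * (A ∩ X).card = A.card + X.card := by
    have hd : Disjoint (A \ X) (X \ A) := disjoint_sdiff_sdiff
    have : (symmDiff A X).card = (A \ X).card + (X \ A).card := by
      rw [symmDiff_def]
      exact Finset.card_union_of_disjoint hd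
    have h1 : (A ∩ X).card + (A \ X).card = A.card := Finset.card_inter_add_card_sdiff A X
    have h2 : (X ∩ A).card + (X \ A).card = X.card := Finset.card_inter_add_card_sdiff X A
    rw [Finset.inter_comm] at h2
    omega
  omega

/-- If all feasible sets of a delta-matroid `D = (E, F)` (with `E` nonempty)
have sizes of the same parity, then `q_Δ(D;-1) = 0`. -/
theorem qDelta_eval_neg_one {α : Type*} [DecidableEq α]
    (E : Finset α) (F : Finset (Finset α)) (h : IsDeltaMatroid E F)
    (hE : E.Nonempty) (hpar : ∀ X ∈ F, ∀ Y ∈ F, X.card % 2 = Y.card % 2) :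
    qDelta E F (-1) = 0 := by
  obtain ⟨A₀, hA₀⟩ := h.1
  have key : ∀ X : Finset α, distSS F X % 2 = (A₀.card + X.card) % 2 := by
    intro X
    have hne : {n : ℕ | ∃ A ∈ F, n = (symmDiff A X).card}.Nonempty :=
      ⟨(symmDiff A₀ X).card, A₀, hA₀, rfl⟩
    obtain ⟨A, hA, hAeq⟩ := Nat.sInf_mem hne
    have := card_symmDiff_parity A X
    have hp := hpar A hA A₀ hA₀
    unfold distSS
    rw [hAeq]
    omega
  have heval : ∀ X : Finset α, ((-1 : ℤ)) ^ distSS F X = (-1) ^ A₀.card * (-1) ^ X.card := by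
    intro X
    rw [← pow_add, neg_one_pow_eq_pow_mod_two, neg_one_pow_eq_pow_mod_two (n := A₀.card + X.card),
      key X]
  unfold qDelta
  simp only [heval]
  rw [← Finset.mul_sum, Finset.sum_powerset_neg_one_pow_card_of_nonempty hE, mul_zero]
end

section
/- On set systems, twist and loop complement at a single point e generate a group isomorphic to S_3; in particular *e and +e are involutions and *e+e*e = +e*e+e. -/
/-!
Split a set system `F` along the pairs `(A, insert e A)` with `e ∉ A`: on each pair `F` is the
vector `(A ∈ F, insert e A ∈ F)` of `𝔽₂²`. The twist swaps the two coordinates and the loop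
complement adds the first one to the second; these are involutions generating `GL₂(𝔽₂) ≅ S₃`,
so they satisfy the braid relation, and by it the monoid they generate has at most the six
elements `1, t, l, tl, lt, tlt`. On the three nonempty set systems over the ground set `{e}`
(the three nonzero vectors) they act as the transpositions `(0 1)` and `(1 2)`, which generate
`S₃`, and a surjection from at most six elements onto `S₃` is an isomorphism.
-/

/-- The twist `M * e` of a set system, acting on its family of feasible sets:
each feasible set is replaced by its symmetric difference with `{e}`. -/
def twistOp {α : Type*} [DecidableEq α] (e : α) : Function.End (Finset (Finset α)) :=
  fun F => F.image fun A => symmDiff A {e}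

/-- The loop complement `M + e` of a set system, acting on its family of
feasible sets: `F ↦ F Δ {A ∪ {e} : A ∈ F, e ∉ A}`. -/
def loopCompOp {α : Type*} [DecidableEq α] (e : α) : Function.End (Finset (Finset α)) :=
  fun F => symmDiff F ((F.filter fun A => e ∉ A).image fun A => insert e A)

namespace Finset

variable {α : Type*} [DecidableEq α] {e : α} {A : Finset α}

theorem symmDiff_singleton_of_notMem (he : e ∉ A) : symmDiff A {e} = insert e A := by
  rw [(disjoint_singleton_right.2 he).symmDiff_eq_sup, sup_eq_union, union_comm, insert_eq]

theorem symmDiff_singleton_of_mem (he : e ∈ A) : symmDiff A {e} = A.erase e := by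
  rw [symmDiff_of_ge (singleton_subset_iff.2 he), sdiff_singleton_eq_erase]

end Finset

section SetFamily

variable {α : Type*} [DecidableEq α] {e : α} {A : Finset α} {F : Finset (Finset α)}

theorem setFamily_ext (e : α) {F G : Finset (Finset α)}
    (h : ∀ A, e ∉ A → (A ∈ F ↔ A ∈ G) ∧ (insert e A ∈ F ↔ insert e A ∈ G)) : F = G := by
  ext B
  by_cases hB : e ∈ B
  · simpa only [Finset.insert_erase hB] using (h _ (Finset.notMem_erase e B)).2
  · exact (h B hB).1

theorem mem_twistOp {B : Finset α} : B ∈ twistOp e F ↔ symmDiff B {e} ∈ F :=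
  Finset.mem_image.trans ⟨fun ⟨C, hC, h⟩ => h ▸ by rwa [symmDiff_symmDiff_cancel_right],
    fun h => ⟨_, h, symmDiff_symmDiff_cancel_right _ _⟩⟩

theorem mem_twistOp_of_notMem (he : e ∉ A) : A ∈ twistOp e F ↔ insert e A ∈ F := by
  rw [mem_twistOp, Finset.symmDiff_singleton_of_notMem he]

theorem insert_mem_twistOp (he : e ∉ A) : insert e A ∈ twistOp e F ↔ A ∈ F := by
  rw [mem_twistOp, ← Finset.symmDiff_singleton_of_notMem he, symmDiff_symmDiff_cancel_right]

theorem mem_loopCompOp {B : Finset α} :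
    B ∈ loopCompOp e F ↔ Xor (B ∈ F) (e ∈ B ∧ B.erase e ∈ F) := by
  have mem_added :
      B ∈ (F.filter fun A => e ∉ A).image (insert e) ↔ e ∈ B ∧ B.erase e ∈ F := by
    simp only [Finset.mem_image, Finset.mem_filter]
    constructor
    · rintro ⟨C, ⟨hC, heC⟩, rfl⟩
      exact ⟨Finset.mem_insert_self e C, by rwa [Finset.erase_insert heC]⟩
    · rintro ⟨heB, hB⟩
      exact ⟨B.erase e, ⟨hB, Finset.notMem_erase e B⟩, Finset.insert_erase heB⟩
  rw [loopCompOp, Finset.mem_symmDiff, mem_added, xor_def]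

theorem mem_loopCompOp_of_notMem (he : e ∉ A) : A ∈ loopCompOp e F ↔ A ∈ F := by
  simp [mem_loopCompOp, he, xor_def]

theorem insert_mem_loopCompOp (he : e ∉ A) :
    insert e A ∈ loopCompOp e F ↔ Xor (insert e A ∈ F) (A ∈ F) := by
  simp [mem_loopCompOp, Finset.erase_insert he]

theorem twistOp_twistOp (F : Finset (Finset α)) : twistOp e (twistOp e F) = F :=
  setFamily_ext e fun A he => by
    simp only [mem_twistOp_of_notMem he, insert_mem_twistOp he, and_self]

theorem loopCompOp_loopCompOp (F : Finset (Finset α)) : loopCompOp e (loopCompOp e F) = F :=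
  setFamily_ext e fun A he => by
    simp only [mem_loopCompOp_of_notMem he, insert_mem_loopCompOp he]
    grind

theorem twistOp_loopCompOp_twistOp (F : Finset (Finset α)) :
    twistOp e (loopCompOp e (twistOp e F)) = loopCompOp e (twistOp e (loopCompOp e F)) :=
  setFamily_ext e fun A he => by
    simp only [mem_twistOp_of_notMem he, insert_mem_twistOp he, mem_loopCompOp_of_notMem he,
      insert_mem_loopCompOp he]
    grind

def familyOnSingleton (e : α) : Fin 3 → Finset (Finset α) := ![{{e}}, {∅}, {∅, {e}}]

theorem familyOnSingleton_injective (e : α) : Function.Injective (familyOnSingleton e) := by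
  intro i j h
  have key := congrArg (fun F => (∅ ∈ F, {e} ∈ F)) h
  fin_cases i <;> fin_cases j <;> simp [familyOnSingleton] at key ⊢

theorem twistOp_familyOnSingleton (e : α) (i : Fin 3) :
    twistOp e (familyOnSingleton e i) = familyOnSingleton e (Equiv.swap 0 1 i) := by
  fin_cases i <;> simp [familyOnSingleton, twistOp, Equiv.swap_apply_of_ne_of_ne,
    Finset.symmDiff_singleton_of_notMem, Finset.pair_comm]

theorem loopCompOp_familyOnSingleton (e : α) (i : Fin 3) :
    loopCompOp e (familyOnSingleton e i) = familyOnSingleton e (Equiv.swap 1 2 i) := by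
  fin_cases i <;> simp [familyOnSingleton, loopCompOp, Equiv.swap_apply_of_ne_of_ne,
    Finset.filter_insert, Finset.filter_singleton, Finset.symmDiff_singleton_of_notMem,
    Finset.symmDiff_singleton_of_mem, Finset.pair_comm]

end SetFamily

namespace Submonoid

variable {M : Type*} [Monoid M] {a b : M}

theorem closure_pair_subset_of_braid (ha : a * a = 1) (hb : b * b = 1)
    (hab : a * b * a = b * a * b) :
    (closure {a, b} : Set M) ⊆ {1, a, b, a * b, b * a, a * b * a} := by
  intro x hx
  induction hx using closure_induction_left with
  | one => exact Or.inl rfl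
  | mul_left y hy x _ ih =>
    simp only [Set.mem_insert_iff, Set.mem_singleton_iff] at hy ih ⊢
    obtain rfl | rfl := hy <;> obtain rfl | rfl | rfl | rfl | rfl | rfl := ih <;>
      first
      | (simp [← mul_assoc, ha, hb]; done)
      | (simp [← mul_assoc, ← hab]; done)
      | simp [hab, ← mul_assoc, hb]

theorem finite_closure_pair_of_braid (ha : a * a = 1) (hb : b * b = 1)
    (hab : a * b * a = b * a * b) : Finite (closure {a, b}) :=
  (Set.toFinite _).subset (closure_pair_subset_of_braid ha hb hab)

theorem card_closure_pair_le_six_of_braid (ha : a * a = 1) (hb : b * b = 1)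
    (hab : a * b * a = b * a * b) : Nat.card (closure {a, b}) ≤ 6 := by
  classical
  have hsub : (closure {a, b} : Set M) ⊆ ↑({1, a, b, a * b, b * a, a * b * a} : Finset M) := by
    simpa using closure_pair_subset_of_braid ha hb hab
  rw [← SetLike.coe_sort_coe, Nat.card_coe_set_eq]
  exact (Set.ncard_le_ncard hsub).trans ((Set.ncard_coe_finset _).trans_le Finset.card_le_six)

end Submonoid

namespace Function.End

variable {X ι : Type*}

def permutingSubmonoid (v : ι → X) : Submonoid (Function.End X) where
  carrier := {f | ∃ σ : Equiv.Perm ι, ∀ i, f (v i) = v (σ i)}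
  one_mem' := ⟨1, fun _ => rfl⟩
  mul_mem' := by
    rintro f g ⟨σ, hf⟩ ⟨τ, hg⟩
    exact ⟨σ * τ, fun i => show f (g (v i)) = _ by rw [hg, hf]; rfl⟩

namespace permutingSubmonoid

variable {v : ι → X}

noncomputable def toPerm (hv : Function.Injective v) : permutingSubmonoid v →* Equiv.Perm ι where
  toFun f := f.2.choose
  map_one' := Equiv.ext fun i => hv ((1 : permutingSubmonoid v).2.choose_spec i).symm
  map_mul' f g := Equiv.ext fun i => hv <| by
    rw [← (f * g).2.choose_spec i]
    show (f : Function.End X) ((g : Function.End X) (v i)) = _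
    rw [g.2.choose_spec, f.2.choose_spec]
    rfl

theorem toPerm_eq (hv : Function.Injective v) {f : permutingSubmonoid v} {σ : Equiv.Perm ι}
    (h : ∀ i, (f : Function.End X) (v i) = v (σ i)) : toPerm hv f = σ :=
  Equiv.ext fun i => hv ((f.2.choose_spec i).symm.trans (h i))

end permutingSubmonoid

end Function.End

theorem twist_loopComp_generate_S3_general {α : Type*} [DecidableEq α] (e : α) :
    (∀ F : Finset (Finset α), twistOp e (twistOp e F) = F) ∧
    (∀ F : Finset (Finset α), loopCompOp e (loopCompOp e F) = F) ∧
    (∀ F : Finset (Finset α),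
      twistOp e (loopCompOp e (twistOp e F)) = loopCompOp e (twistOp e (loopCompOp e F))) ∧
    Nonempty
      ((Submonoid.closure {twistOp e, loopCompOp e} : Submonoid (Function.End (Finset (Finset α))))
        ≃* Equiv.Perm (Fin 3)) := by
  refine ⟨twistOp_twistOp, loopCompOp_loopCompOp, twistOp_loopCompOp_twistOp, ?_⟩
  set G := Submonoid.closure {twistOp e, loopCompOp e}
  have ht := twistOp_familyOnSingleton e
  have hl := loopCompOp_familyOnSingleton e
  have hv := familyOnSingleton_injective e
  have hG : G ≤ Function.End.permutingSubmonoid (familyOnSingleton e) :=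
    Submonoid.closure_le.2 (Set.insert_subset ⟨_, ht⟩ (Set.singleton_subset_iff.2 ⟨_, hl⟩))
  let φ := (Function.End.permutingSubmonoid.toPerm hv).comp (Submonoid.inclusion hG)
  have hsurj : Function.Surjective φ := by
    rw [← MonoidHom.mrange_eq_top, eq_top_iff, ← Equiv.Perm.mclosure_swap_castSucc_succ 2,
      Submonoid.closure_le, Set.range_subset_iff, Fin.forall_fin_two]
    exact ⟨⟨⟨_, Submonoid.subset_closure (Set.mem_insert _ _)⟩,
        Function.End.permutingSubmonoid.toPerm_eq hv ht⟩,
      ⟨⟨_, Submonoid.subset_closure (Set.mem_insert_of_mem _ rfl)⟩,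
        Function.End.permutingSubmonoid.toPerm_eq hv hl⟩⟩
  have htt : twistOp e * twistOp e = 1 := funext twistOp_twistOp
  have hll : loopCompOp e * loopCompOp e = 1 := funext loopCompOp_loopCompOp
  have htlt := funext (twistOp_loopCompOp_twistOp (e := e))
  have := Submonoid.finite_closure_pair_of_braid htt hll htlt
  have hcard : Nat.card G ≤ Nat.card (Equiv.Perm (Fin 3)) := by
    rw [Nat.card_perm, Nat.card_fin]
    exact Submonoid.card_closure_pair_le_six_of_braid htt hll htlt
  exact ⟨MulEquiv.ofBijective φ (hsurj.bijective_of_nat_card_le hcard)⟩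

/-- On set systems, the twist `*e` and loop complement `+e` at a point `e` are
involutions satisfying `*e+e*e = +e*e+e`, and they generate a group isomorphic
to the symmetric group `S₃`. -/
theorem twist_loopComp_generate_S3 {α : Type*} [DecidableEq α] [Nonempty α] (e : α) :
    (∀ F : Finset (Finset α), twistOp e (twistOp e F) = F) ∧
    (∀ F : Finset (Finset α), loopCompOp e (loopCompOp e F) = F) ∧
    (∀ F : Finset (Finset α),
      twistOp e (loopCompOp e (twistOp e F)) = loopCompOp e (twistOp e (loopCompOp e F))) ∧
    Nonempty
      ((Submonoid.closure {twistOp e, loopCompOp e} : Submonoid (Function.End (Finset (Finset α))))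
        ≃* Equiv.Perm (Fin 3)) :=
  twist_loopComp_generate_S3_general e
end
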